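/- arXiv:1907.00304 — 6 statements merged into one kernel-verified Lean document; each statement's English description precedes it below -/
import Mathlib

section
/- For every real η > 0, every integer n ≥ 2, and every s ∈ S_n⁺, the maximum-likelihood estimate satisfies P[â_ML(U₁ⁿ) − a > η] ≤ ∏_{ℓ=1}^{n−1} (1 − 2σ²α_ℓ)^{−1/2}; equivalently, −(1/n)·log P[â_ML(U₁ⁿ) − a > η] ≥ sup_{s ∈ S_n⁺} (1/(2n)) Σ_{ℓ=1}^{n−1} log(1 − 2σ²α_ℓ). -/
open MeasureTheory ProbabilityTheory Finset

/-- The sequence `α_ℓ` from the paper: `α₁ = (σ²s² − 2ηs)/2` and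
`α_ℓ = ([a² + 2σ²s(a+η)]·α_{ℓ−1} + α₁)/(1 − 2σ²α_{ℓ−1})` for `ℓ ≥ 2`. -/
noncomputable def alphaSeq (a σ η s : ℝ) : ℕ → ℝ
  | 0 => 0
  | 1 => (σ ^ 2 * s ^ 2 - 2 * η * s) / 2
  | (ℓ + 2) =>
      ((a ^ 2 + 2 * σ ^ 2 * s * (a + η)) * alphaSeq a σ η s (ℓ + 1)
            + (σ ^ 2 * s ^ 2 - 2 * η * s) / 2)
        / (1 - 2 * σ ^ 2 * alphaSeq a σ η s (ℓ + 1))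

/-- The set `S_n⁺ = {s > 0 : α_ℓ < 1/(2σ²) for all 1 ≤ ℓ ≤ n}`. -/
def Splus (a σ η : ℝ) (n : ℕ) : Set ℝ :=
  {s : ℝ | 0 < s ∧ ∀ ℓ ∈ Finset.Icc 1 n, alphaSeq a σ η s ℓ < 1 / (2 * σ ^ 2)}

/-- The maximum-likelihood estimate `â_ML(u₁ⁿ) = (Σ_{i=1}^{n−1} uᵢu_{i+1}) / (Σ_{i=1}^{n−1} uᵢ²)`. -/
noncomputable def aML {Ω : Type*} (U : ℕ → Ω → ℝ) (n : ℕ) (ω : Ω) : ℝ :=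
  (∑ i ∈ Finset.Icc 1 (n - 1), U i ω * U (i + 1) ω)
    / (∑ i ∈ Finset.Icc 1 (n - 1), (U i ω) ^ 2)

/-!
Chernoff's method. Since `U (i + 1) - (a + η) U i = Z (i + 1) - η U i`, on the event
`â_ML - a > η` the sum `V = Σ_{i<n} (U i Z (i + 1) - η U i ²)` (`deviationSum`) is positive,
so the probability is at most `E exp (s V)`. This moment generating function is computed exactly
by integrating out the noises `Z n, Z (n - 1), …` one at a time, each being independent of the
past: integrating a Gaussian against the exponential of a quadratic contributes the factor
`(1 - 2σ²α_k)^(-1/2)` and turns the coefficient `α_k` of `U m ²` into `α_{k+1}`.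
-/

open Real
open scoped ENNReal NNReal

@[to_additive]
lemma Finset.prod_Icc_pred_eq_prod_range {M : Type*} [CommMonoid M] {g : ℕ → M}
    (hg : g 0 = 1) (n : ℕ) : ∏ i ∈ Icc 1 (n - 1), g i = ∏ i ∈ range n, g i := by
  cases n with
  | zero => simp
  | succ n =>
    rw [range_eq_Ico, prod_eq_prod_Ico_succ_bot n.add_one_pos, hg, one_mul, Nat.add_sub_cancel,
      zero_add, Ico_add_one_right_eq_Icc]

lemma neg_mul_sq_add_mul_eq {b : ℝ} (hb : b ≠ 0) (c x : ℝ) :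
    -(b * x ^ 2) + c * x = -(b * (x - c / (2 * b)) ^ 2) + c ^ 2 / (4 * b) := by
  field_simp; ring

lemma integrable_exp_neg_mul_sq_add_mul {b : ℝ} (hb : 0 < b) (c : ℝ) :
    Integrable fun x : ℝ ↦ exp (-(b * x ^ 2) + c * x) := by
  simp_rw [neg_mul_sq_add_mul_eq hb.ne', exp_add, ← neg_mul]
  exact ((integrable_exp_neg_mul_sq hb).comp_sub_right _).mul_const _

lemma integral_exp_neg_mul_sq_add_mul {b : ℝ} (hb : 0 < b) (c : ℝ) :
    ∫ x, exp (-(b * x ^ 2) + c * x) = √(π / b) * exp (c ^ 2 / (4 * b)) := by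
  simp_rw [neg_mul_sq_add_mul_eq hb.ne', exp_add, integral_mul_const, ← neg_mul,
    integral_sub_right_eq_self (fun x ↦ exp (-b * x ^ 2)), integral_gaussian]

lemma lintegral_exp_quadratic_gaussianReal {v : ℝ≥0} {α : ℝ} (hα : 2 * v * α < 1) (β γ : ℝ) :
    ∫⁻ z, ENNReal.ofReal (exp (α * z ^ 2 + β * z + γ)) ∂gaussianReal 0 v
      = ENNReal.ofReal ((1 - 2 * v * α) ^ (-(1 / 2 : ℝ))
          * exp (γ + v * β ^ 2 / (2 * (1 - 2 * v * α)))) := by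
  rcases eq_or_ne v 0 with rfl | hv
  · simp [gaussianReal_zero_var]
  set D := 1 - 2 * v * α
  have hD : 0 < D := by linarith
  have hv' : (0 : ℝ) < v := by positivity
  set b := D / (2 * v)
  have hb : 0 < b := by positivity
  have hdens : ∀ z, gaussianPDFReal 0 v z * exp (α * z ^ 2 + β * z + γ)
      = (√(2 * π * v))⁻¹ * exp γ * exp (-(b * z ^ 2) + β * z) := by
    intro z
    rw [gaussianPDFReal, mul_assoc, ← exp_add, mul_assoc (√(2 * π * v))⁻¹, ← exp_add]
    congr 2
    simp only [b, D]
    field_simp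
    ring
  rw [gaussianReal_of_var_ne_zero _ hv, lintegral_withDensity_eq_lintegral_mul _
    (measurable_gaussianPDF _ _) (by fun_prop)]
  simp only [Pi.mul_apply, gaussianPDF, ← ENNReal.ofReal_mul (gaussianPDFReal_nonneg _ _ _), hdens]
  rw [← ofReal_integral_eq_lintegral_ofReal
      ((integrable_exp_neg_mul_sq_add_mul hb β).const_mul _) (ae_of_all _ fun _ ↦ by positivity),
    integral_const_mul, integral_exp_neg_mul_sq_add_mul hb]
  congr 1
  have hsqrt : (√(2 * π * v))⁻¹ * √(π / b) = D ^ (-(1 / 2 : ℝ)) := by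
    rw [show π / b = 2 * π * v / D by simp only [b]; field_simp, sqrt_div (by positivity),
      rpow_neg hD.le, ← sqrt_eq_rpow]
    have : √(2 * π * v) ≠ 0 := by positivity
    field_simp
  have hexp : γ + β ^ 2 / (4 * b) = γ + v * β ^ 2 / (2 * D) := by
    simp only [b]; field_simp; ring
  rw [← hsqrt, ← hexp, exp_add]
  ring

lemma ProbabilityTheory.IndepFun.lintegral_comp {Ω α β : Type*} [MeasurableSpace Ω]
    [MeasurableSpace α] [MeasurableSpace β] {μ : Measure Ω} [IsFiniteMeasure μ] {X : Ω → α}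
    {Y : Ω → β} (hXY : X ⟂ᵢ[μ] Y) (hX : Measurable X) (hY : Measurable Y)
    {f : α × β → ℝ≥0∞} (hf : Measurable f) :
    ∫⁻ ω, f (X ω, Y ω) ∂μ = ∫⁻ x, ∫⁻ y, f (x, y) ∂μ.map Y ∂μ.map X := by
  rw [← lintegral_map hf (hX.prodMk hY), (indepFun_iff_map_prod_eq_prod_map_map
    hX.aemeasurable hY.aemeasurable).mp hXY, lintegral_prod _ hf.aemeasurable]

lemma ProbabilityTheory.iIndepFun.indepFun_of_measurable_iSup {Ω ι β γ : Type*}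
    [MeasurableSpace Ω] [mβ : MeasurableSpace β] [MeasurableSpace γ] {μ : Measure Ω}
    {Z : ι → Ω → β} (hZ : iIndepFun Z μ) (hZm : ∀ i, Measurable (Z i)) {S : Set ι} {j : ι}
    (hj : j ∉ S) {X : Ω → γ} (hX : Measurable[⨆ i ∈ S, mβ.comap (Z i)] X) :
    X ⟂ᵢ[μ] Z j := by
  have h := indep_iSup_of_disjoint (fun i ↦ (hZm i).comap_le) hZ.iIndep
    (Set.disjoint_singleton_right.mpr hj)
  rw [_root_.iSup_singleton] at h
  exact (IndepFun_iff_Indep _ _ _).mpr (indep_of_indep_of_le_left h hX.comap_le)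

/-- Completing the square: integrating `z ~ N(0, σ²)` out of
`exp (α_k (a u + z)² + s (u z - η u²))` leaves `(1 - 2σ²α_k)^(-1/2) exp (α_{k+1} u²)`. -/
lemma alphaSeq_succ (a σ η s : ℝ) {k : ℕ} (hk : 2 * σ ^ 2 * alphaSeq a σ η s k ≠ 1) :
    alphaSeq a σ η s (k + 1) = alphaSeq a σ η s k * a ^ 2 - s * η
      + σ ^ 2 * (2 * alphaSeq a σ η s k * a + s) ^ 2
        / (2 * (1 - 2 * σ ^ 2 * alphaSeq a σ η s k)) := by
  have hD : 1 - 2 * σ ^ 2 * alphaSeq a σ η s k ≠ 0 := sub_ne_zero.mpr hk.symm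
  cases k with
  | zero => simp only [alphaSeq]; field_simp; ring
  | succ k => rw [alphaSeq]; field_simp; ring

section GaussMarkov

variable {Ω : Type*} {a : ℝ} {Z U : ℕ → Ω → ℝ}

abbrev noiseSigma (Z : ℕ → Ω → ℝ) (m : ℕ) : MeasurableSpace Ω :=
  ⨆ i ∈ Set.Iic m, MeasurableSpace.comap (Z i) inferInstance

lemma noiseSigma_le [MeasurableSpace Ω] (hZm : ∀ i, Measurable (Z i)) (m : ℕ) :
    noiseSigma Z m ≤ ‹MeasurableSpace Ω› :=
  iSup₂_le fun i _ ↦ (hZm i).comap_le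

lemma measurable_noise_noiseSigma {m i : ℕ} (hi : i ≤ m) : Measurable[noiseSigma Z m] (Z i) :=
  (comap_measurable (Z i)).mono
    (le_iSup₂ (f := fun j (_ : j ∈ Set.Iic m) ↦ MeasurableSpace.comap (Z j) _) i hi) le_rfl

lemma measurable_process_noiseSigma (hU0 : U 0 = fun _ ↦ 0)
    (hU : ∀ i, U (i + 1) = fun ω ↦ a * U i ω + Z (i + 1) ω) {m j : ℕ} (hj : j ≤ m) :
    Measurable[noiseSigma Z m] (U j) := by
  induction j with
  | zero => rw [hU0]; exact measurable_const
  | succ j ih =>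
    rw [hU j]
    exact ((ih (by omega)).const_mul a).add (measurable_noise_noiseSigma hj)

def deviationSum (U Z : ℕ → Ω → ℝ) (η : ℝ) (m : ℕ) (ω : Ω) : ℝ :=
  ∑ i ∈ range m, (U i ω * Z (i + 1) ω - η * U i ω ^ 2)

lemma measurable_deviationSum_noiseSigma (hU0 : U 0 = fun _ ↦ 0)
    (hU : ∀ i, U (i + 1) = fun ω ↦ a * U i ω + Z (i + 1) ω) (η : ℝ) (m : ℕ) :
    Measurable[noiseSigma Z m] (deviationSum U Z η m) := by
  refine Finset.measurable_sum (range m) fun i hi ↦ ?_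
  have hi : i + 1 ≤ m := mem_range.mp hi
  have hUi := measurable_process_noiseSigma hU0 hU (m := m) (j := i) (by omega)
  exact (hUi.mul (measurable_noise_noiseSigma hi)).sub ((hUi.pow_const 2).const_mul η)

lemma deviationSum_eq (hU0 : U 0 = fun _ ↦ 0)
    (hU : ∀ i, U (i + 1) = fun ω ↦ a * U i ω + Z (i + 1) ω) (η : ℝ) (n : ℕ) (ω : Ω) :
    deviationSum U Z η n ω = ∑ i ∈ Icc 1 (n - 1), U i ω * U (i + 1) ω
      - (a + η) * ∑ i ∈ Icc 1 (n - 1), U i ω ^ 2 := by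
  rw [mul_sum, ← sum_sub_distrib, sum_Icc_pred_eq_sum_range (by simp [hU0]),
    deviationSum]
  refine sum_congr rfl fun i _ ↦ ?_
  rw [hU i]
  ring

variable [MeasurableSpace Ω] {μ : Measure Ω} {σ η s : ℝ}

lemma lintegral_exp_alphaSeq_succ [IsProbabilityMeasure μ] (hZm : ∀ i, Measurable (Z i))
    (hZindep : iIndepFun Z μ)
    (hZlaw : ∀ i, Measure.map (Z i) μ = gaussianReal 0 ⟨σ ^ 2, sq_nonneg σ⟩)
    (hU0 : U 0 = fun _ ↦ 0) (hU : ∀ i, U (i + 1) = fun ω ↦ a * U i ω + Z (i + 1) ω)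
    {k : ℕ} (hk : 2 * σ ^ 2 * alphaSeq a σ η s k < 1) (m : ℕ) :
    ∫⁻ ω, ENNReal.ofReal (exp (alphaSeq a σ η s k * U (m + 1) ω ^ 2
        + s * deviationSum U Z η (m + 1) ω)) ∂μ
      = ENNReal.ofReal ((1 - 2 * σ ^ 2 * alphaSeq a σ η s k) ^ (-(1 / 2 : ℝ)))
        * ∫⁻ ω, ENNReal.ofReal (exp (alphaSeq a σ η s (k + 1) * U m ω ^ 2
            + s * deviationSum U Z η m ω)) ∂μ := by
  set α := alphaSeq a σ η s k
  set X : Ω → ℝ × ℝ := fun ω ↦ (U m ω, deviationSum U Z η m ω)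
  have hXpast : Measurable[noiseSigma Z m] X :=
    (measurable_process_noiseSigma hU0 hU le_rfl).prodMk
      (measurable_deviationSum_noiseSigma hU0 hU η m)
  have hX : Measurable X := hXpast.mono (noiseSigma_le hZm m) le_rfl
  have hXZ : X ⟂ᵢ[μ] Z (m + 1) :=
    hZindep.indepFun_of_measurable_iSup hZm (by simp) hXpast
  -- the exponent as a quadratic polynomial in the new noise `z = Z (m + 1)`
  set f : (ℝ × ℝ) × ℝ → ℝ≥0∞ := fun p ↦ ENNReal.ofReal (exp (α * p.2 ^ 2
    + (2 * α * a + s) * p.1.1 * p.2 + ((α * a ^ 2 - s * η) * p.1.1 ^ 2 + s * p.1.2)))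
  have hf : Measurable f := by fun_prop
  have hfX : ∀ ω, f (X ω, Z (m + 1) ω) = ENNReal.ofReal (exp (α * U (m + 1) ω ^ 2
      + s * deviationSum U Z η (m + 1) ω)) := by
    intro ω
    simp only [f, X, hU m, deviationSum, sum_range_succ]
    ring_nf
  have hnext : alphaSeq a σ η s (k + 1)
      = α * a ^ 2 - s * η + σ ^ 2 * (2 * α * a + s) ^ 2 / (2 * (1 - 2 * σ ^ 2 * α)) :=
    alphaSeq_succ a σ η s hk.ne
  have hinner : ∀ x : ℝ × ℝ, ∫⁻ z, f (x, z) ∂μ.map (Z (m + 1))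
      = ENNReal.ofReal ((1 - 2 * σ ^ 2 * α) ^ (-(1 / 2 : ℝ)))
        * ENNReal.ofReal (exp (alphaSeq a σ η s (k + 1) * x.1 ^ 2 + s * x.2)) := by
    intro x
    simp only [f]
    rw [hZlaw, lintegral_exp_quadratic_gaussianReal (v := ⟨σ ^ 2, sq_nonneg σ⟩) hk,
      ← ENNReal.ofReal_mul (rpow_nonneg (by linarith) _), hnext]
    -- the frozen variance `⟨σ ^ 2, _⟩` is an anonymous constructor, out of reach of `NNReal.coe_mk`
    simp only [NNReal.toReal]
    ring_nf
  calc _ = ∫⁻ ω, f (X ω, Z (m + 1) ω) ∂μ := (lintegral_congr hfX).symm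
    _ = ∫⁻ x, ∫⁻ z, f (x, z) ∂μ.map (Z (m + 1)) ∂μ.map X := hXZ.lintegral_comp hX (hZm _) hf
    _ = _ := by
      simp_rw [hinner]
      rw [lintegral_const_mul _ (by fun_prop), lintegral_map (by fun_prop) hX]

lemma lintegral_exp_alphaSeq [IsProbabilityMeasure μ] (hZm : ∀ i, Measurable (Z i))
    (hZindep : iIndepFun Z μ)
    (hZlaw : ∀ i, Measure.map (Z i) μ = gaussianReal 0 ⟨σ ^ 2, sq_nonneg σ⟩)
    (hU0 : U 0 = fun _ ↦ 0) (hU : ∀ i, U (i + 1) = fun ω ↦ a * U i ω + Z (i + 1) ω) (m : ℕ)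
    {k : ℕ} (hk : ∀ j < m, 2 * σ ^ 2 * alphaSeq a σ η s (k + j) < 1) :
    ∫⁻ ω, ENNReal.ofReal (exp (alphaSeq a σ η s k * U m ω ^ 2 + s * deviationSum U Z η m ω)) ∂μ
      = ∏ j ∈ range m,
          ENNReal.ofReal ((1 - 2 * σ ^ 2 * alphaSeq a σ η s (k + j)) ^ (-(1 / 2 : ℝ))) := by
  induction m generalizing k with
  | zero => simp [hU0, deviationSum]
  | succ m ih =>
    rw [lintegral_exp_alphaSeq_succ hZm hZindep hZlaw hU0 hU (by simpa using hk 0 m.add_one_pos),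
      ih fun j hj ↦ by simpa [add_assoc, add_comm 1] using hk (j + 1) (by omega),
      prod_range_succ', mul_comm]
    simp only [add_zero, add_assoc, add_comm 1]

lemma measure_aML_sub_gt_le_lintegral_exp (hZm : ∀ i, Measurable (Z i))
    (hU0 : U 0 = fun _ ↦ 0) (hU : ∀ i, U (i + 1) = fun ω ↦ a * U i ω + Z (i + 1) ω)
    (haη : 0 < a + η) (hs : 0 ≤ s) (n : ℕ) :
    μ {ω | aML U n ω - a > η} ≤ ∫⁻ ω, ENNReal.ofReal (exp (s * deviationSum U Z η n ω)) ∂μ := by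
  have hevent : {ω | aML U n ω - a > η}
      ⊆ {ω | 1 ≤ ENNReal.ofReal (exp (s * deviationSum U Z η n ω))} := by
    intro ω hω
    simp only [Set.mem_ofPred_eq, ENNReal.one_le_ofReal, one_le_exp_iff] at hω ⊢
    refine mul_nonneg hs (le_of_lt ?_)
    rw [deviationSum_eq hU0 hU]
    rcases (sum_nonneg fun i _ ↦ sq_nonneg (U i ω) : 0 ≤ ∑ i ∈ Icc 1 (n - 1), U i ω ^ 2).eq_or_lt
      with hzero | hpos
    · simp only [aML, ← hzero, div_zero] at hω
      linarith
    · have := (lt_div_iff₀ hpos).mp (show a + η < aML U n ω by linarith)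
      linarith
  have hmeas : Measurable (deviationSum U Z η n) :=
    (measurable_deviationSum_noiseSigma hU0 hU η n).mono (noiseSigma_le hZm n) le_rfl
  calc μ {ω | aML U n ω - a > η}
      ≤ μ {ω | 1 ≤ ENNReal.ofReal (exp (s * deviationSum U Z η n ω))} := measure_mono hevent
    _ ≤ _ := by simpa only [one_mul] using mul_meas_ge_le_lintegral₀ (by fun_prop) 1

end GaussMarkov

theorem statement0_general
    {Ω : Type*} [MeasurableSpace Ω] (μ : Measure Ω) [IsProbabilityMeasure μ]
    (a σ : ℝ) (ha : 1 < a) (hσ : 0 < σ)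
    (Z : ℕ → Ω → ℝ) (hZmeas : ∀ i, Measurable (Z i))
    (hZindep : iIndepFun Z μ)
    (hZlaw : ∀ i, Measure.map (Z i) μ = gaussianReal 0 ⟨σ ^ 2, sq_nonneg σ⟩)
    (U : ℕ → Ω → ℝ) (hU0 : U 0 = fun _ => 0)
    (hU : ∀ i, U (i + 1) = fun ω => a * U i ω + Z (i + 1) ω)
    (η : ℝ) (hη : 0 < η) (n : ℕ)
    (s : ℝ) (hs : s ∈ Splus a σ η n) :
    (μ {ω | aML U n ω - a > η}).toReal
      ≤ ∏ ℓ ∈ Finset.Icc 1 (n - 1), (1 - 2 * σ ^ 2 * alphaSeq a σ η s ℓ) ^ (-(1 / 2 : ℝ)) := by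
  obtain ⟨hs0, hsα⟩ := hs
  have hα : ∀ j < n, 2 * σ ^ 2 * alphaSeq a σ η s j < 1 := by
    intro j hj
    rcases j.eq_zero_or_pos with rfl | hj0
    · simp [alphaSeq]
    · rw [← lt_div_iff₀' (by positivity)]
      exact hsα j (mem_Icc.mpr ⟨hj0, hj.le⟩)
  have hfactor : ∀ j ∈ range n, 0 ≤ (1 - 2 * σ ^ 2 * alphaSeq a σ η s j) ^ (-(1 / 2 : ℝ)) :=
    fun j hj ↦ rpow_nonneg (by linarith [hα j (mem_range.mp hj)]) _
  have hbound := measure_aML_sub_gt_le_lintegral_exp (μ := μ) hZmeas hU0 hU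
    (show 0 < a + η by linarith) hs0.le n
  have hmgf := lintegral_exp_alphaSeq hZmeas hZindep hZlaw hU0 hU n (k := 0) (by simpa using hα)
  simp only [show alphaSeq a σ η s 0 = 0 from rfl, zero_mul, zero_add] at hmgf
  rw [hmgf, ← ENNReal.ofReal_prod_of_nonneg hfactor] at hbound
  rw [prod_Icc_pred_eq_prod_range (by simp [alphaSeq])]
  exact ENNReal.toReal_le_of_le_ofReal (prod_nonneg hfactor) hbound

theorem statement0
    {Ω : Type*} [MeasurableSpace Ω] (μ : Measure Ω) [IsProbabilityMeasure μ]
    (a σ : ℝ) (ha : 1 < a) (hσ : 0 < σ)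
    (Z : ℕ → Ω → ℝ) (hZmeas : ∀ i, Measurable (Z i))
    (hZindep : iIndepFun Z μ)
    (hZlaw : ∀ i, Measure.map (Z i) μ = gaussianReal 0 ⟨σ ^ 2, sq_nonneg σ⟩)
    (U : ℕ → Ω → ℝ) (hU0 : U 0 = fun _ => 0)
    (hU : ∀ i, U (i + 1) = fun ω => a * U i ω + Z (i + 1) ω)
    (η : ℝ) (hη : 0 < η) (n : ℕ) (hn : 2 ≤ n)
    (s : ℝ) (hs : s ∈ Splus a σ η n) :
    (μ {ω | aML U n ω - a > η}).toReal
      ≤ ∏ ℓ ∈ Finset.Icc 1 (n - 1), (1 - 2 * σ ^ 2 * alphaSeq a σ η s ℓ) ^ (-(1 / 2 : ℝ)) :=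
  statement0_general μ a σ ha hσ Z hZmeas hZindep hZlaw U hU0 hU η hη n s hs
end

section
/- Fix a real constant η > 0. For a real number s > 0, the inequality α_ℓ < 1/(2σ²) holds for every integer ℓ ≥ 1 if and only if s ≤ 2η/σ². In other words, the intersection S_∞⁺ = ⋂_{n≥1} S_n⁺ equals the half-open interval (0, 2η/σ²]. -/
open Finset

/-!
Write `α_{ℓ+1} = (A α_ℓ + α₁) / (1 − 2σ² α_ℓ)` with `A = a² + 2σ²s(a+η) ≥ 1`, and note that
`α₁ = s(σ²s − 2η)/2` has the sign of `s − 2η/σ²`. If `α₁ ≤ 0`, the map preserves `(−∞, 0]`, so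
every `α_ℓ` is nonpositive. If `α₁ > 0` and the sequence stays below the pole `1/(2σ²)`, the
denominator lies in `(0, 1]`, so `α_{ℓ+1} ≥ α_ℓ + α₁` and `α_ℓ ≥ ℓ α₁` eventually crosses the pole.
-/

lemma affine_div_one_sub_mul_nonpos {A c κ x : ℝ} (hA : 0 ≤ A) (hc : c ≤ 0) (hκ : 0 ≤ κ)
    (hx : x ≤ 0) : (A * x + c) / (1 - κ * x) ≤ 0 :=
  div_nonpos_of_nonpos_of_nonneg (by nlinarith) (by nlinarith)

lemma add_le_affine_div_one_sub_mul {A c κ x : ℝ} (hA : 1 ≤ A) (hc : 0 ≤ c) (hκ : 0 ≤ κ)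
    (hx : 0 ≤ x) (hκx : κ * x < 1) : x + c ≤ (A * x + c) / (1 - κ * x) := by
  rw [le_div_iff₀ (by linarith)]
  nlinarith [mul_nonneg (mul_nonneg hκ hx) (add_nonneg hx hc)]

section alphaSeq

variable {a σ η s : ℝ}

lemma alphaSeq_add_two (ℓ : ℕ) :
    alphaSeq a σ η s (ℓ + 2) =
      ((a ^ 2 + 2 * σ ^ 2 * s * (a + η)) * alphaSeq a σ η s (ℓ + 1) + alphaSeq a σ η s 1)
        / (1 - 2 * σ ^ 2 * alphaSeq a σ η s (ℓ + 1)) :=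
  rfl

lemma alphaSeq_nonpos (hA : 0 ≤ a ^ 2 + 2 * σ ^ 2 * s * (a + η)) (h₁ : alphaSeq a σ η s 1 ≤ 0) :
    ∀ ℓ, alphaSeq a σ η s ℓ ≤ 0
  | 0 => le_rfl
  | 1 => h₁
  | ℓ + 2 => by
    rw [alphaSeq_add_two]
    exact affine_div_one_sub_mul_nonpos hA h₁ (by positivity) (alphaSeq_nonpos hA h₁ (ℓ + 1))

lemma natCast_mul_alphaSeq_one_le (hA : 1 ≤ a ^ 2 + 2 * σ ^ 2 * s * (a + η))
    (h₁ : 0 ≤ alphaSeq a σ η s 1) (hpole : ∀ ℓ, 1 ≤ ℓ → alphaSeq a σ η s ℓ < 1 / (2 * σ ^ 2)) :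
    ∀ ℓ : ℕ, ℓ * alphaSeq a σ η s 1 ≤ alphaSeq a σ η s ℓ
  | 0 => by simp [alphaSeq]
  | 1 => by simp
  | ℓ + 2 => by
    have ih := natCast_mul_alphaSeq_one_le hA h₁ hpole (ℓ + 1)
    have hnonneg : 0 ≤ alphaSeq a σ η s (ℓ + 1) := le_trans (by positivity) ih
    have hbelow : 2 * σ ^ 2 * alphaSeq a σ η s (ℓ + 1) < 1 := by
      rcases (show 0 ≤ 2 * σ ^ 2 by positivity).eq_or_lt with h0 | hpos
      · simp [← h0]
      · exact (lt_div_iff₀' hpos).1 (by simpa using hpole (ℓ + 1) (by omega))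
    rw [alphaSeq_add_two]
    refine le_trans ?_ (add_le_affine_div_one_sub_mul hA h₁ (by positivity) hnonneg hbelow)
    push_cast at ih ⊢
    linarith

lemma exists_pole_le_alphaSeq (hA : 1 ≤ a ^ 2 + 2 * σ ^ 2 * s * (a + η))
    (h₁ : 0 < alphaSeq a σ η s 1) : ∃ ℓ, 1 ≤ ℓ ∧ 1 / (2 * σ ^ 2) ≤ alphaSeq a σ η s ℓ := by
  by_contra! hpole
  obtain ⟨n, hn⟩ := exists_nat_gt (1 / (2 * σ ^ 2) / alphaSeq a σ η s 1)
  have hn₁ : 1 ≤ n := Nat.cast_pos.1 ((div_nonneg (by positivity) h₁.le).trans_lt hn)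
  have := natCast_mul_alphaSeq_one_le hA h₁.le hpole n
  have := hpole n hn₁
  rw [div_lt_iff₀ h₁] at hn
  linarith

lemma alphaSeq_one_nonpos_iff (hσ : 0 < σ) (hs : 0 < s) :
    alphaSeq a σ η s 1 ≤ 0 ↔ s ≤ 2 * η / σ ^ 2 := by
  rw [le_div_iff₀ (by positivity), show alphaSeq a σ η s 1 = s * (σ ^ 2 * s - 2 * η) / 2 by
    simp only [alphaSeq]; ring]
  constructor <;> intro h <;> nlinarith

lemma forall_alphaSeq_lt_iff (ha : 1 < a) (hσ : 0 < σ) (hη : 0 < η) (hs : 0 < s) :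
    (∀ ℓ : ℕ, 1 ≤ ℓ → alphaSeq a σ η s ℓ < 1 / (2 * σ ^ 2)) ↔ s ≤ 2 * η / σ ^ 2 := by
  have hA : 1 ≤ a ^ 2 + 2 * σ ^ 2 * s * (a + η) := by
    nlinarith [mul_pos (mul_pos (pow_pos hσ 2) hs) (add_pos (zero_lt_one.trans ha) hη)]
  rw [← alphaSeq_one_nonpos_iff hσ hs]
  constructor
  · intro hpole
    by_contra! h₁
    obtain ⟨ℓ, hℓ, hle⟩ := exists_pole_le_alphaSeq hA h₁
    exact (hpole ℓ hℓ).not_ge hle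
  · intro h₁ ℓ _
    exact (alphaSeq_nonpos (zero_le_one.trans hA) h₁ ℓ).trans_lt (by positivity)

end alphaSeq

theorem statement3 (a σ η : ℝ) (ha : 1 < a) (hσ : 0 < σ) (hη : 0 < η) :
    (∀ s : ℝ, 0 < s →
        ((∀ ℓ : ℕ, 1 ≤ ℓ → alphaSeq a σ η s ℓ < 1 / (2 * σ ^ 2)) ↔ s ≤ 2 * η / σ ^ 2)) ∧
      {s : ℝ | 0 < s ∧ ∀ ℓ : ℕ, 1 ≤ ℓ → alphaSeq a σ η s ℓ < 1 / (2 * σ ^ 2)}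
        = Set.Ioc 0 (2 * η / σ ^ 2) :=
  ⟨fun _ hs => forall_alphaSeq_lt_iff ha hσ hη hs,
    Set.ext fun _ => and_congr_right fun hs => forall_alphaSeq_lt_iff ha hσ hη hs⟩
end

section
/- Let (η_n) be a positive sequence with √n·η_n → ∞ as n → ∞. Then liminf_{n→∞} −(1/n)·log P[â_ML(U₁ⁿ) − a > η_n] ≥ log a and liminf_{n→∞} −(1/n)·log P[â_ML(U₁ⁿ) − a < −η_n] ≥ log a; equivalently, for every ε > 0 there exists N such that for all n ≥ N, both P[â_ML(U₁ⁿ) − a > η_n] and P[â_ML(U₁ⁿ) − a < −η_n] are at most exp(−n·(log a − ε)). -/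
open MeasureTheory ProbabilityTheory Finset Filter

/-!
With `M_m = ∑_{i=1}^m U_i Z_{i+1}` and `S_m = ∑_{i=1}^m U_i²` one has
`â_ML − a = M_{n−1} / S_{n−1}`. Since the `U_i` are predictable, `exp (θ M_m − σ² θ² S_m / 2)`
is a supermartingale, and Markov's inequality with `θ = η / σ²` gives
`P[M_m > η S_m, S_m ≥ r] ≤ exp (−η² r / (2σ²))`. On the other hand `S_{n−1} ≥ U_{n−1}²` and
`U_{n−1} = a^{n−2} Z_1 + R` with `R` independent of `Z_1`, so
`P[S_{n−1} < δ²] ≤ 2δ / (a^{n−2} √(2πσ²))`. With `δ = e^{nε/4}` the first bound is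
super-exponentially small because `n η_n² ≥ 1` eventually, and the second is
`O(e^{nε/4} a^{−n})`. The lower deviation is the upper one for the predictable process `−U`.
-/

open Real
open scoped NNReal ENNReal

namespace ProbabilityTheory

lemma lintegral_exp_mul_gaussianReal (m t : ℝ) (v : ℝ≥0) :
    ∫⁻ x, ENNReal.ofReal (exp (t * x)) ∂gaussianReal m v =
      ENNReal.ofReal (exp (m * t + v * t ^ 2 / 2)) := by
  rw [← ofReal_integral_eq_lintegral_ofReal (integrable_exp_mul_gaussianReal t)
    (ae_of_all _ fun _ => (exp_pos _).le), ← congrFun mgf_fun_id_gaussianReal t]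
  rfl

lemma gaussianPDFReal_le_inv_sqrt (m : ℝ) (v : ℝ≥0) (x : ℝ) :
    gaussianPDFReal m v x ≤ (√(2 * π * v))⁻¹ := by
  rw [gaussianPDFReal]
  refine mul_le_of_le_one_right (by positivity) (exp_le_one_iff.mpr ?_)
  rw [neg_div, neg_nonpos]
  positivity

lemma gaussianReal_Ioo_le (m : ℝ) {v : ℝ≥0} (hv : v ≠ 0) (x y : ℝ) :
    gaussianReal m v (Set.Ioo x y) ≤ ENNReal.ofReal ((y - x) / √(2 * π * v)) := by
  calc gaussianReal m v (Set.Ioo x y)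
      = ∫⁻ z in Set.Ioo x y, gaussianPDF m v z := gaussianReal_apply m hv _
    _ ≤ ∫⁻ _ in Set.Ioo x y, ENNReal.ofReal (√(2 * π * v))⁻¹ :=
        setLIntegral_mono (by fun_prop) fun z _ =>
          ENNReal.ofReal_le_ofReal (gaussianPDFReal_le_inv_sqrt m v z)
    _ = ENNReal.ofReal ((y - x) / √(2 * π * v)) := by
        rw [setLIntegral_const, Real.volume_Ioo, ← ENNReal.ofReal_mul (by positivity),
          div_eq_mul_inv, mul_comm]

variable {Ω ι β γ γ' : Type*} {mΩ : MeasurableSpace Ω} {μ : Measure Ω}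
  [MeasurableSpace β] [MeasurableSpace γ] [MeasurableSpace γ']

lemma IndepFun.lintegral_comp_prod [IsFiniteMeasure μ] {X : Ω → β} {Y : Ω → γ}
    (hXY : IndepFun X Y μ) (hX : Measurable X) (hY : Measurable Y)
    {f : β × γ → ℝ≥0∞} (hf : Measurable f) :
    ∫⁻ ω, f (X ω, Y ω) ∂μ = ∫⁻ x, ∫⁻ y, f (x, y) ∂μ.map Y ∂μ.map X := by
  rw [← lintegral_prod _ hf.aemeasurable,
    ← (indepFun_iff_map_prod_eq_prod_map_map hX.aemeasurable hY.aemeasurable).mp hXY,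
    lintegral_map hf (hX.prodMk hY)]

lemma IndepFun.measure_preimage_prod [IsFiniteMeasure μ] {X : Ω → β} {Y : Ω → γ}
    (hXY : IndepFun X Y μ) (hX : Measurable X) (hY : Measurable Y)
    {A : Set (β × γ)} (hA : MeasurableSet A) :
    μ ((fun ω => (X ω, Y ω)) ⁻¹' A) = ∫⁻ x, μ.map Y (Prod.mk x ⁻¹' A) ∂μ.map X := by
  rw [← Measure.map_apply (hX.prodMk hY) hA,
    (indepFun_iff_map_prod_eq_prod_map_map hX.aemeasurable hY.aemeasurable).mp hXY,
    Measure.prod_apply hA]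

abbrev sigmaOf (Z : ι → Ω → β) (S : Set ι) : MeasurableSpace Ω :=
  ⨆ i ∈ S, MeasurableSpace.comap (Z i) ‹MeasurableSpace β›

lemma sigmaOf_mono (Z : ι → Ω → β) {S T : Set ι} (hST : S ⊆ T) : sigmaOf Z S ≤ sigmaOf Z T :=
  biSup_mono hST

lemma sigmaOf_le {Z : ι → Ω → β} (hZ : ∀ i, Measurable (Z i)) (S : Set ι) :
    sigmaOf Z S ≤ mΩ :=
  iSup₂_le fun i _ => (hZ i).comap_le

lemma measurable_sigmaOf {Z : ι → Ω → β} {S : Set ι} {i : ι} (hi : i ∈ S) :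
    Measurable[sigmaOf Z S] (Z i) :=
  measurable_iff_comap_le.mpr (le_biSup (fun j => MeasurableSpace.comap (Z j) _) hi)

lemma iIndepFun.indepFun_of_measurable_sigmaOf {Z : ι → Ω → β} (hZ : iIndepFun Z μ)
    (hZm : ∀ i, Measurable (Z i)) {S T : Set ι} (hST : Disjoint S T) {X : Ω → γ}
    {Y : Ω → γ'} (hX : Measurable[sigmaOf Z S] X) (hY : Measurable[sigmaOf Z T] Y) :
    IndepFun X Y μ :=
  (IndepFun_iff_Indep _ _ _).mpr <| indep_of_indep_of_le
    (indep_iSup_of_disjoint (fun i => (hZm i).comap_le) hZ.iIndep hST)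
    hX.comap_le hY.comap_le

lemma measure_abs_add_mul_lt_le [IsProbabilityMeasure μ] {X Y : Ω → ℝ} (hXY : IndepFun X Y μ)
    (hX : Measurable X) (hY : Measurable Y) {m : ℝ} {v : ℝ≥0} (hv : v ≠ 0)
    (hYlaw : μ.map Y = gaussianReal m v) {c : ℝ} (hc : 0 < c) (δ : ℝ) :
    μ {ω | |X ω + c * Y ω| < δ} ≤ ENNReal.ofReal (2 * δ / (c * √(2 * π * v))) := by
  have hA : MeasurableSet {p : ℝ × ℝ | |p.1 + c * p.2| < δ} :=
    measurableSet_lt (by fun_prop) measurable_const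
  have hslice (x : ℝ) : Prod.mk x ⁻¹' {p : ℝ × ℝ | |p.1 + c * p.2| < δ} =
      Set.Ioo ((-δ - x) / c) ((δ - x) / c) := by
    ext y
    simp only [Set.mem_preimage, Set.mem_ofPred_eq, Set.mem_Ioo, abs_lt, div_lt_iff₀ hc,
      lt_div_iff₀ hc]
    constructor <;> rintro ⟨h₁, h₂⟩ <;> constructor <;> linarith
  have := Measure.isProbabilityMeasure_map (μ := μ) hX.aemeasurable
  calc μ {ω | |X ω + c * Y ω| < δ}
      = ∫⁻ x, gaussianReal m v (Set.Ioo ((-δ - x) / c) ((δ - x) / c)) ∂μ.map X := by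
        simp_rw [← hslice, ← hYlaw]
        exact hXY.measure_preimage_prod hX hY hA
    _ ≤ ∫⁻ _, ENNReal.ofReal (2 * δ / (c * √(2 * π * v))) ∂μ.map X := by
        refine lintegral_mono fun x => (gaussianReal_Ioo_le m hv _ _).trans_eq ?_
        congr 1
        field_simp
        ring
    _ = ENNReal.ofReal (2 * δ / (c * √(2 * π * v))) := by simp

end ProbabilityTheory

namespace GaussMarkov

variable {Ω : Type*} {mΩ : MeasurableSpace Ω} {μ : Measure Ω}

def crossSum (V Z : ℕ → Ω → ℝ) (m : ℕ) (ω : Ω) : ℝ :=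
  ∑ i ∈ Icc 1 m, V i ω * Z (i + 1) ω

def sqSum (V : ℕ → Ω → ℝ) (m : ℕ) (ω : Ω) : ℝ :=
  ∑ i ∈ Icc 1 m, V i ω ^ 2

section Predictable

variable {V Z : ℕ → Ω → ℝ}

lemma measurable_crossSum (hV : ∀ i, Measurable[sigmaOf Z (Set.Iic i)] (V i)) (m : ℕ) :
    Measurable[sigmaOf Z (Set.Iic (m + 1))] (crossSum V Z m) :=
  Finset.measurable_sum _ fun i hi => by
    have hi : i ≤ m := (mem_Icc.mp hi).2
    exact ((hV i).mono (sigmaOf_mono Z (Set.Iic_subset_Iic.mpr (by omega))) le_rfl).mul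
      (measurable_sigmaOf (Set.mem_Iic.mpr (by omega)))

lemma measurable_sqSum (hV : ∀ i, Measurable[sigmaOf Z (Set.Iic i)] (V i)) (m : ℕ) :
    Measurable[sigmaOf Z (Set.Iic m)] (sqSum V m) :=
  Finset.measurable_sum _ fun i hi =>
    ((hV i).mono (sigmaOf_mono Z (Set.Iic_subset_Iic.mpr (mem_Icc.mp hi).2)) le_rfl).pow_const 2

lemma crossSum_succ (m : ℕ) (ω : Ω) :
    crossSum V Z (m + 1) ω = crossSum V Z m ω + V (m + 1) ω * Z (m + 2) ω :=
  sum_Icc_succ_top (Nat.le_add_left 1 m) _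

lemma sqSum_succ (m : ℕ) (ω : Ω) : sqSum V (m + 1) ω = sqSum V m ω + V (m + 1) ω ^ 2 :=
  sum_Icc_succ_top (Nat.le_add_left 1 m) _

lemma lintegral_exp_add_mul_sub_gaussianReal_le {v : ℝ≥0} {θ κ : ℝ} (hθκ : v * θ ^ 2 / 2 ≤ κ)
    (x u : ℝ) :
    ∫⁻ y, ENNReal.ofReal (exp (x + (θ * u * y - κ * u ^ 2))) ∂gaussianReal 0 v ≤
      ENNReal.ofReal (exp x) := by
  have hsplit (y : ℝ) : ENNReal.ofReal (exp (x + (θ * u * y - κ * u ^ 2))) =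
      ENNReal.ofReal (exp (x - κ * u ^ 2)) * ENNReal.ofReal (exp (θ * u * y)) := by
    rw [← ENNReal.ofReal_mul (exp_nonneg _), ← exp_add]
    ring_nf
  simp_rw [hsplit]
  rw [lintegral_const_mul _ (by fun_prop), lintegral_exp_mul_gaussianReal,
    ← ENNReal.ofReal_mul (exp_nonneg _), ← exp_add]
  refine ENNReal.ofReal_le_ofReal (exp_le_exp.mpr ?_)
  nlinarith [mul_le_mul_of_nonneg_right hθκ (sq_nonneg u)]

lemma lintegral_exp_crossSum_sub_sqSum_le_one [IsProbabilityMeasure μ]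
    (hZm : ∀ i, Measurable (Z i)) (hZ : iIndepFun Z μ) {v : ℝ≥0}
    (hZlaw : ∀ i, μ.map (Z i) = gaussianReal 0 v)
    (hV : ∀ i, Measurable[sigmaOf Z (Set.Iic i)] (V i)) {θ κ : ℝ} (hθκ : v * θ ^ 2 / 2 ≤ κ)
    (m : ℕ) :
    ∫⁻ ω, ENNReal.ofReal (exp (θ * crossSum V Z m ω - κ * sqSum V m ω)) ∂μ ≤ 1 := by
  induction m with
  | zero => simp [crossSum, sqSum]
  | succ m ih =>
    set X : Ω → ℝ × ℝ := fun ω => (θ * crossSum V Z m ω - κ * sqSum V m ω, V (m + 1) ω)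
    have hX : Measurable[sigmaOf Z (Set.Iic (m + 1))] X :=
      (((measurable_crossSum hV m).const_mul θ).sub (((measurable_sqSum hV m).mono
        (sigmaOf_mono Z (Set.Iic_subset_Iic.mpr m.le_succ)) le_rfl).const_mul κ)).prodMk (hV _)
    have hXZ : IndepFun X (Z (m + 2)) μ :=
      hZ.indepFun_of_measurable_sigmaOf hZm (T := {m + 2}) (by simp) hX
        (measurable_sigmaOf (Set.mem_singleton _))
    set F : (ℝ × ℝ) × ℝ → ℝ≥0∞ :=
      fun p => ENNReal.ofReal (exp (p.1.1 + (θ * p.1.2 * p.2 - κ * p.1.2 ^ 2)))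
    calc ∫⁻ ω, ENNReal.ofReal (exp (θ * crossSum V Z (m + 1) ω - κ * sqSum V (m + 1) ω)) ∂μ
        = ∫⁻ ω, F (X ω, Z (m + 2) ω) ∂μ := by
          refine lintegral_congr fun ω => ?_
          simp only [F, X, crossSum_succ, sqSum_succ]
          ring_nf
      _ = ∫⁻ x, ∫⁻ y, F (x, y) ∂gaussianReal 0 v ∂μ.map X := by
          rw [hXZ.lintegral_comp_prod (hX.mono (sigmaOf_le hZm _) le_rfl) (hZm _)
            (by fun_prop), hZlaw]
      _ ≤ ∫⁻ x, ENNReal.ofReal (exp x.1) ∂μ.map X :=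
          lintegral_mono fun x => lintegral_exp_add_mul_sub_gaussianReal_le hθκ x.1 x.2
      _ ≤ 1 := by
          rwa [lintegral_map (by fun_prop) (hX.mono (sigmaOf_le hZm _) le_rfl)]

lemma measure_lt_crossSum_le [IsProbabilityMeasure μ] (hZm : ∀ i, Measurable (Z i))
    (hZ : iIndepFun Z μ) {v : ℝ≥0} (hZlaw : ∀ i, μ.map (Z i) = gaussianReal 0 v)
    (hV : ∀ i, Measurable[sigmaOf Z (Set.Iic i)] (V i)) {η : ℝ} (hη : 0 ≤ η) (r : ℝ) (m : ℕ) :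
    μ {ω | η * sqSum V m ω < crossSum V Z m ω ∧ r ≤ sqSum V m ω} ≤
      ENNReal.ofReal (exp (-(η ^ 2 / (2 * v)) * r)) := by
  set κ := η ^ 2 / (2 * v)
  have hκ : 0 ≤ κ := by positivity
  have hθκ : v * (η / v) ^ 2 / 2 ≤ κ := by
    rcases eq_or_ne (v : ℝ) 0 with hv | hv
    · simp [hv, κ]
    · exact le_of_eq (by simp only [κ]; field_simp)
  set f : Ω → ℝ≥0∞ := fun ω => ENNReal.ofReal (exp (η / v * crossSum V Z m ω - κ * sqSum V m ω))
  have hf : Measurable f := by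
    have hM := (measurable_crossSum hV m).mono (sigmaOf_le hZm _) le_rfl
    have hS := (measurable_sqSum hV m).mono (sigmaOf_le hZm _) le_rfl
    fun_prop
  -- on the event, `(η / v) M - κ S > 2 κ S - κ S ≥ κ r`
  have hsub : {ω | η * sqSum V m ω < crossSum V Z m ω ∧ r ≤ sqSum V m ω} ⊆
      {ω | ENNReal.ofReal (exp (κ * r)) ≤ f ω} := by
    rintro ω ⟨hMS, hrS⟩
    refine ENNReal.ofReal_le_ofReal (exp_le_exp.mpr ?_)
    have h2κ : η / v * (η * sqSum V m ω) = 2 * κ * sqSum V m ω := by simp only [κ]; ring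
    linarith [mul_le_mul_of_nonneg_left hMS.le (by positivity : 0 ≤ η / v),
      mul_le_mul_of_nonneg_left hrS hκ]
  calc μ {ω | η * sqSum V m ω < crossSum V Z m ω ∧ r ≤ sqSum V m ω}
      ≤ μ {ω | ENNReal.ofReal (exp (κ * r)) ≤ f ω} := measure_mono hsub
    _ ≤ (∫⁻ ω, f ω ∂μ) / ENNReal.ofReal (exp (κ * r)) :=
        meas_ge_le_lintegral_div hf.aemeasurable (by positivity) ENNReal.ofReal_ne_top
    _ ≤ 1 / ENNReal.ofReal (exp (κ * r)) := by
        gcongr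
        exact lintegral_exp_crossSum_sub_sqSum_le_one hZm hZ hZlaw hV hθκ m
    _ = ENNReal.ofReal (exp (-κ * r)) := by
        rw [one_div, ← ENNReal.ofReal_inv_of_pos (exp_pos _), ← exp_neg, neg_mul]

end Predictable

lemma crossSum_neg (V Z : ℕ → Ω → ℝ) (m : ℕ) (ω : Ω) :
    crossSum (-V) Z m ω = -crossSum V Z m ω := by
  simp [crossSum]

lemma sqSum_neg (V : ℕ → Ω → ℝ) (m : ℕ) (ω : Ω) : sqSum (-V) m ω = sqSum V m ω := by
  simp [sqSum]

lemma sq_le_sqSum (V : ℕ → Ω → ℝ) {m : ℕ} (hm : 1 ≤ m) (ω : Ω) : V m ω ^ 2 ≤ sqSum V m ω :=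
  single_le_sum (f := fun i => V i ω ^ 2) (fun _ _ => sq_nonneg _) (mem_Icc.mpr ⟨hm, le_rfl⟩)

section Autoregressive

variable {a : ℝ} {U Z : ℕ → Ω → ℝ}

lemma measurable_sigmaOf_Iic (hU0 : U 0 = fun _ => 0)
    (hU : ∀ i, U (i + 1) = fun ω => a * U i ω + Z (i + 1) ω) (i : ℕ) :
    Measurable[sigmaOf Z (Set.Iic i)] (U i) := by
  induction i with
  | zero => rw [hU0]; exact measurable_const
  | succ i ih =>
    rw [hU i]
    exact (measurable_const.mul (ih.mono (sigmaOf_mono Z (Set.Iic_subset_Iic.mpr i.le_succ))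
      le_rfl)).add (measurable_sigmaOf (Set.mem_Iic.mpr le_rfl))

lemma measurable_sigmaOf_compl_sub_pow_mul (hU0 : U 0 = fun _ => 0)
    (hU : ∀ i, U (i + 1) = fun ω => a * U i ω + Z (i + 1) ω) (m : ℕ) :
    Measurable[sigmaOf Z {1}ᶜ] (fun ω => U (m + 1) ω - a ^ m * Z 1 ω) := by
  induction m with
  | zero =>
    have h : (fun ω => U 1 ω - a ^ 0 * Z 1 ω) = fun _ => 0 := by
      funext ω
      simp [hU 0, hU0]
    rw [h]
    exact measurable_const
  | succ m ih =>
    have h : (fun ω => U (m + 2) ω - a ^ (m + 1) * Z 1 ω) =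
        fun ω => a * (U (m + 1) ω - a ^ m * Z 1 ω) + Z (m + 2) ω := by
      funext ω
      rw [hU (m + 1)]
      ring
    rw [h]
    exact (measurable_const.mul ih).add (measurable_sigmaOf (by simp))

lemma measure_abs_lt_le [IsProbabilityMeasure μ] (hZm : ∀ i, Measurable (Z i))
    (hZ : iIndepFun Z μ) (hU0 : U 0 = fun _ => 0)
    (hU : ∀ i, U (i + 1) = fun ω => a * U i ω + Z (i + 1) ω) (ha : 0 < a) {v : ℝ≥0}
    (hv : v ≠ 0) (hZ1 : μ.map (Z 1) = gaussianReal 0 v) (m : ℕ) (δ : ℝ) :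
    μ {ω | |U (m + 1) ω| < δ} ≤ ENNReal.ofReal (2 * δ / (a ^ m * √(2 * π * v))) := by
  have hR := measurable_sigmaOf_compl_sub_pow_mul hU0 hU m
  have hRZ : IndepFun (fun ω => U (m + 1) ω - a ^ m * Z 1 ω) (Z 1) μ :=
    hZ.indepFun_of_measurable_sigmaOf hZm disjoint_compl_left hR
      (measurable_sigmaOf (Set.mem_singleton 1))
  simpa only [sub_add_cancel] using measure_abs_add_mul_lt_le hRZ
    (hR.mono (sigmaOf_le hZm _) le_rfl) (hZm 1) hv hZ1 (pow_pos ha m) δ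

lemma aML_sub_eq_div (hU : ∀ i, U (i + 1) = fun ω => a * U i ω + Z (i + 1) ω) {n : ℕ} {ω : Ω}
    (hS : sqSum U (n - 1) ω ≠ 0) :
    aML U n ω - a = crossSum U Z (n - 1) ω / sqSum U (n - 1) ω := by
  have hnum : ∑ i ∈ Icc 1 (n - 1), U i ω * U (i + 1) ω =
      a * sqSum U (n - 1) ω + crossSum U Z (n - 1) ω := by
    simp only [sqSum, crossSum, mul_sum, ← sum_add_distrib, hU]
    exact sum_congr rfl fun i _ => by ring
  change (∑ i ∈ Icc 1 (n - 1), U i ω * U (i + 1) ω) / sqSum U (n - 1) ω - a = _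
  rw [hnum, add_div, mul_div_cancel_right₀ _ hS, add_sub_cancel_left]

lemma setOf_aML_sub_gt_subset (hU : ∀ i, U (i + 1) = fun ω => a * U i ω + Z (i + 1) ω)
    (n : ℕ) (η : ℝ) {r : ℝ} (hr : 0 < r) :
    {ω | aML U n ω - a > η} ⊆
      {ω | η * sqSum U (n - 1) ω < crossSum U Z (n - 1) ω ∧ r ≤ sqSum U (n - 1) ω} ∪
        {ω | sqSum U (n - 1) ω < r} := by
  intro ω hω
  by_cases hS : r ≤ sqSum U (n - 1) ω
  · have hSpos := hr.trans_le hS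
    rw [Set.mem_ofPred_eq, aML_sub_eq_div hU hSpos.ne', gt_iff_lt, lt_div_iff₀ hSpos] at hω
    exact Or.inl ⟨hω, hS⟩
  · exact Or.inr (not_le.mp hS)

lemma setOf_aML_sub_lt_subset (hU : ∀ i, U (i + 1) = fun ω => a * U i ω + Z (i + 1) ω)
    (n : ℕ) (η : ℝ) {r : ℝ} (hr : 0 < r) :
    {ω | aML U n ω - a < -η} ⊆
      {ω | η * sqSum (-U) (n - 1) ω < crossSum (-U) Z (n - 1) ω ∧ r ≤ sqSum (-U) (n - 1) ω} ∪
        {ω | sqSum U (n - 1) ω < r} := by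
  intro ω hω
  simp only [crossSum_neg, sqSum_neg]
  by_cases hS : r ≤ sqSum U (n - 1) ω
  · have hSpos := hr.trans_le hS
    rw [Set.mem_ofPred_eq, aML_sub_eq_div hU hSpos.ne', div_lt_iff₀ hSpos] at hω
    exact Or.inl ⟨by linarith, hS⟩
  · exact Or.inr (not_le.mp hS)

lemma measure_deviation_le [IsProbabilityMeasure μ] (hZm : ∀ i, Measurable (Z i))
    (hZ : iIndepFun Z μ) {v : ℝ≥0} (hv : v ≠ 0) (hZlaw : ∀ i, μ.map (Z i) = gaussianReal 0 v)
    (hU0 : U 0 = fun _ => 0) (hU : ∀ i, U (i + 1) = fun ω => a * U i ω + Z (i + 1) ω)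
    (ha : 0 < a) {V : ℕ → Ω → ℝ} (hV : ∀ i, Measurable[sigmaOf Z (Set.Iic i)] (V i))
    {η : ℝ} (hη : 0 ≤ η) {n : ℕ} (hn : 2 ≤ n) {δ : ℝ} (hδ : 0 < δ) :
    μ ({ω | η * sqSum V (n - 1) ω < crossSum V Z (n - 1) ω ∧ δ ^ 2 ≤ sqSum V (n - 1) ω} ∪
        {ω | sqSum U (n - 1) ω < δ ^ 2}) ≤
      ENNReal.ofReal (exp (-(η ^ 2 / (2 * v)) * δ ^ 2)) +
        ENNReal.ofReal (2 * δ / (a ^ (n - 2) * √(2 * π * v))) := by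
  have hsmall : {ω | sqSum U (n - 1) ω < δ ^ 2} ⊆ {ω | |U (n - 2 + 1) ω| < δ} := fun ω hω => by
    rw [Set.mem_ofPred_eq, show n - 2 + 1 = n - 1 by omega]
    exact abs_lt_of_sq_lt_sq ((sq_le_sqSum U (by omega) ω).trans_lt hω) hδ.le
  exact (measure_union_le _ _).trans (add_le_add
    (measure_lt_crossSum_le hZm hZ hZlaw hV hη _ _)
    ((measure_mono hsmall).trans (measure_abs_lt_le hZm hZ hU0 hU ha hv (hZlaw 1) _ _)))

end Autoregressive

lemma eventually_exp_neg_mul_exp_le {η : ℕ → ℝ}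
    (hη : Tendsto (fun n : ℕ => √n * η n) atTop atTop) {c : ℝ} (hc : 0 < c) (L : ℝ) {ε : ℝ}
    (hε : 0 < ε) :
    ∀ᶠ n : ℕ in atTop, exp (-(η n ^ 2 / c) * exp (n * ε / 4) ^ 2) ≤ exp (-n * L) / 2 := by
  have hpoly : ∀ᶠ n : ℕ in atTop, (n : ℝ) ^ 2 ≤ (c * (|L| + 1))⁻¹ * exp (ε / 2 * n) := by
    filter_upwards [((isLittleO_pow_exp_pos_mul_atTop 2 (half_pos hε)).comp_tendsto
      tendsto_natCast_atTop_atTop).bound (by positivity : 0 < (c * (|L| + 1))⁻¹)] with n hn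
    simpa [abs_of_nonneg, Real.norm_eq_abs] using hn
  filter_upwards [hη.eventually_ge_atTop 1, hpoly, eventually_ge_atTop 1] with n hηn hn hn1
  have hn1 : (1 : ℝ) ≤ n := by exact_mod_cast hn1
  -- `n η_n² ≥ 1` and `e^{nε/2} ≥ c (|L| + 1) n²` beat the linear exponent `n L + log 2`
  have hnη : 1 ≤ n * η n ^ 2 := by
    nlinarith [sq_sqrt (by positivity : (0 : ℝ) ≤ n), sqrt_nonneg (n : ℝ)]
  have hexp : exp (n * ε / 4) ^ 2 = exp (ε / 2 * n) := by rw [← exp_nat_mul]; ring_nf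
  have hexp' : c * (|L| + 1) * n ^ 2 ≤ exp (ε / 2 * n) := by
    rw [le_inv_mul_iff₀ (by positivity)] at hn
    linarith
  have hlog2 : log 2 < 1 := by
    have := log_two_lt_d9; norm_num at this; linarith
  have key : n * L + n ≤ η n ^ 2 / c * exp (ε / 2 * n) := by
    rw [div_mul_eq_mul_div, le_div_iff₀ hc]
    have h₁ : 0 ≤ c * (|L| + 1) * n * (n * η n ^ 2 - 1) := by
      have := abs_nonneg L
      apply mul_nonneg <;> [positivity; linarith]
    have h₂ : 0 ≤ c * n * (|L| - L) := mul_nonneg (by positivity) (by linarith [le_abs_self L])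
    nlinarith [mul_le_mul_of_nonneg_left hexp' (sq_nonneg (η n))]
  have hhalf : exp (-n * L) / 2 = exp (-n * L - log 2) := by rw [exp_sub, exp_log two_pos]
  rw [hexp, hhalf, exp_le_exp]
  linarith

lemma eventually_two_mul_exp_div_le {a : ℝ} (ha : 0 < a) {K : ℝ} (hK : 0 < K) {ε : ℝ}
    (hε : 0 < ε) :
    ∀ᶠ n : ℕ in atTop,
      2 * exp (n * ε / 4) / (a ^ (n - 2) * K) ≤ exp (-n * (log a - ε)) / 2 := by
  have hgrow : Tendsto (fun n : ℕ => exp (3 * ε / 4 * n)) atTop atTop :=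
    tendsto_exp_atTop.comp (tendsto_natCast_atTop_atTop.const_mul_atTop (by positivity))
  filter_upwards [eventually_ge_atTop 2, hgrow.eventually_ge_atTop (4 * a ^ 2 / K)]
    with n hn hbig
  obtain ⟨m, rfl⟩ := Nat.exists_eq_add_of_le' hn
  have hsplit : exp (-(m + 2 : ℕ) * (log a - ε)) =
      exp ((m + 2 : ℕ) * ε / 4) * exp (3 * ε / 4 * (m + 2 : ℕ)) / (a ^ m * a ^ 2) := by
    rw [← exp_add, ← pow_add, ← exp_log (pow_pos ha _), ← exp_sub, log_pow]
    ring_nf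
  rw [hsplit, Nat.add_sub_cancel, div_le_div_iff₀ (by positivity) two_pos,
    div_mul_eq_mul_div, le_div_iff₀ (by positivity)]
  rw [div_le_iff₀ hK] at hbig
  nlinarith [mul_le_mul_of_nonneg_left hbig
    (by positivity : 0 ≤ exp ((m + 2 : ℕ) * ε / 4) * a ^ m)]

end GaussMarkov

open GaussMarkov in
theorem statement6_general
    {Ω : Type*} [MeasurableSpace Ω] (μ : Measure Ω) [IsProbabilityMeasure μ]
    (a σ : ℝ) (ha : 1 < a) (hσ : 0 < σ)
    (Z : ℕ → Ω → ℝ) (hZmeas : ∀ i, Measurable (Z i))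
    (hZindep : iIndepFun Z μ)
    (hZlaw : ∀ i, Measure.map (Z i) μ = gaussianReal 0 ⟨σ ^ 2, sq_nonneg σ⟩)
    (U : ℕ → Ω → ℝ) (hU0 : U 0 = fun _ => 0)
    (hU : ∀ i, U (i + 1) = fun ω => a * U i ω + Z (i + 1) ω)
    (η : ℕ → ℝ)
    (hηgrow : Tendsto (fun n : ℕ => Real.sqrt n * η n) atTop atTop) :
    ∀ ε : ℝ, 0 < ε → ∃ N : ℕ, ∀ n : ℕ, N ≤ n →
      (μ {ω | aML U n ω - a > η n}).toReal ≤ Real.exp (-(n : ℝ) * (Real.log a - ε)) ∧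
        (μ {ω | aML U n ω - a < -(η n)}).toReal ≤ Real.exp (-(n : ℝ) * (Real.log a - ε)) := by
  intro ε hε
  set v : ℝ≥0 := ⟨σ ^ 2, sq_nonneg σ⟩
  have hv : v ≠ 0 := fun h => (pow_pos hσ 2).ne' (congrArg NNReal.toReal h)
  have ha0 : 0 < a := one_pos.trans ha
  obtain ⟨N, hN⟩ := eventually_atTop.mp <| (hηgrow.eventually_gt_atTop 0).and <|
    (eventually_exp_neg_mul_exp_le hηgrow (by positivity : (0 : ℝ) < 2 * v) (log a - ε) hε).and <|
    (eventually_two_mul_exp_div_le ha0 (by positivity : 0 < √(2 * π * v)) hε).and <|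
    eventually_ge_atTop 2
  refine ⟨N, fun n hn => ?_⟩
  obtain ⟨hηn, htail, hsmall, hn2⟩ := hN n hn
  have hη : 0 ≤ η n := (pos_of_mul_pos_right hηn (sqrt_nonneg _)).le
  set δ := exp (n * ε / 4)
  have hδ : 0 < δ := exp_pos _
  have hUpred := measurable_sigmaOf_Iic hU0 hU
  have hbound (V : ℕ → Ω → ℝ) (hV : ∀ i, Measurable[sigmaOf Z (Set.Iic i)] (V i)) :
      μ ({ω | η n * sqSum V (n - 1) ω < crossSum V Z (n - 1) ω ∧ δ ^ 2 ≤ sqSum V (n - 1) ω} ∪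
        {ω | sqSum U (n - 1) ω < δ ^ 2}) ≤ ENNReal.ofReal (exp (-n * (log a - ε))) := by
    refine (measure_deviation_le hZmeas hZindep hv hZlaw hU0 hU ha0 hV hη hn2 hδ).trans ?_
    rw [← ENNReal.ofReal_add (exp_nonneg _) (by positivity)]
    exact ENNReal.ofReal_le_ofReal (by linarith)
  have hr : 0 < δ ^ 2 := by positivity
  exact ⟨ENNReal.toReal_le_of_le_ofReal (exp_nonneg _)
      ((measure_mono (setOf_aML_sub_gt_subset hU n (η n) hr)).trans (hbound U hUpred)),
    ENNReal.toReal_le_of_le_ofReal (exp_nonneg _)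
      ((measure_mono (setOf_aML_sub_lt_subset hU n (η n) hr)).trans
        (hbound (-U) fun i => (hUpred i).neg))⟩

theorem statement6
    {Ω : Type*} [MeasurableSpace Ω] (μ : Measure Ω) [IsProbabilityMeasure μ]
    (a σ : ℝ) (ha : 1 < a) (hσ : 0 < σ)
    (Z : ℕ → Ω → ℝ) (hZmeas : ∀ i, Measurable (Z i))
    (hZindep : iIndepFun Z μ)
    (hZlaw : ∀ i, Measure.map (Z i) μ = gaussianReal 0 ⟨σ ^ 2, sq_nonneg σ⟩)
    (U : ℕ → Ω → ℝ) (hU0 : U 0 = fun _ => 0)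
    (hU : ∀ i, U (i + 1) = fun ω => a * U i ω + Z (i + 1) ω)
    (η : ℕ → ℝ) (hηpos : ∀ n, 0 < η n)
    (hηgrow : Tendsto (fun n : ℕ => Real.sqrt n * η n) atTop atTop) :
    ∀ ε : ℝ, 0 < ε → ∃ N : ℕ, ∀ n : ℕ, N ≤ n →
      (μ {ω | aML U n ω - a > η n}).toReal ≤ Real.exp (-(n : ℝ) * (Real.log a - ε)) ∧
        (μ {ω | aML U n ω - a < -(η n)}).toReal ≤ Real.exp (-(n : ℝ) * (Real.log a - ε)) :=
  statement6_general μ a σ ha hσ Z hZmeas hZindep hZlaw U hU0 hU η hηgrow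
end

section
/- There exists a real constant c ≥ (1/2)·log a and an integer N such that for all n ≥ N, P[ |â_ML(U₁ⁿ) − a| ≥ √( (log log n)/n ) ] ≤ 2·exp(−c·n). -/
/-!
Since `U (i + 1) = a * U i + Z (i + 1)`, the error of the estimate is
`â - a = (∑ U i * Z (i + 1)) / ∑ U i ^ 2`, so by Cauchy–Schwarz
`(â - a) ^ 2 ≤ (∑ Z (i + 1) ^ 2) / ∑ U i ^ 2 ≤ (∑ Z (i + 1) ^ 2) / U (n - 1) ^ 2`.
Hence `(â - a) ^ 2 ≥ 1 / n` forces either a large noise energy `∑ Z (i + 1) ^ 2 ≥ T`,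
which has probability at most `n σ² / T` by Markov, or a small final state `|U (n - 1)| ≤ r`
with `r ^ 2 ≥ T n`. The latter has probability at most `2 r / (√(2π) σ a ^ (n - 2))`:
`U (n - 1)` is the sum of `a ^ (n - 2) * Z 1` and an independent variable, and the density of
`a ^ (n - 2) * Z 1` is at most `1 / (√(2π) σ a ^ (n - 2))`. With `T = a ^ (3n/4)` and
`r = n a ^ (3n/8)` both probabilities are eventually below `a ^ (-n/2)`, which gives
`c = (log a) / 2`.
-/

open MeasureTheory ProbabilityTheory Finset Real Filter
open scoped NNReal ENNReal

lemma integral_sq_gaussianReal (v : ℝ≥0) : ∫ x, x ^ 2 ∂gaussianReal 0 v = v := by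
  rw [← variance_fun_id_gaussianReal (μ := 0),
    variance_of_integral_eq_zero aemeasurable_id' integral_id_gaussianReal]

lemma gaussianPDFReal_le (m : ℝ) (v : ℝ≥0) (x : ℝ) :
    gaussianPDFReal m v x ≤ (√(2 * π * v))⁻¹ := by
  rw [gaussianPDFReal]
  refine mul_le_of_le_one_right (by positivity) (exp_le_one_iff.mpr ?_)
  rw [neg_div]
  exact neg_nonpos.mpr (by positivity)

lemma gaussianReal_Icc_le (m : ℝ) {v : ℝ≥0} (hv : v ≠ 0) (c d : ℝ) :
    gaussianReal m v (Set.Icc c d) ≤ ENNReal.ofReal ((d - c) / √(2 * π * v)) := by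
  calc gaussianReal m v (Set.Icc c d)
      ≤ ∫⁻ _ in Set.Icc c d, ENNReal.ofReal (√(2 * π * v))⁻¹ := by
        rw [gaussianReal_apply m hv]
        exact lintegral_mono fun x => ENNReal.ofReal_le_ofReal (gaussianPDFReal_le m v x)
    _ = ENNReal.ofReal ((d - c) / √(2 * π * v)) := by
        rw [setLIntegral_const, Real.volume_Icc, ← ENNReal.ofReal_mul (by positivity),
          div_eq_inv_mul]

lemma measure_abs_add_le_le {Ω : Type*} [MeasurableSpace Ω] {μ : Measure Ω}
    [IsProbabilityMeasure μ] {X W : Ω → ℝ} (hX : Measurable X) (hW : Measurable W)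
    (hXW : IndepFun X W μ) {m : ℝ} {v : ℝ≥0} (hv : v ≠ 0)
    (hlaw : μ.map X = gaussianReal m v) (r : ℝ) :
    μ {ω | |X ω + W ω| ≤ r} ≤ ENNReal.ofReal (2 * r / √(2 * π * v)) := by
  set S := {p : ℝ × ℝ | |p.1 + p.2| ≤ r}
  have hS : MeasurableSet S := measurableSet_le (by fun_prop) measurable_const
  have hslice : ∀ y : ℝ, (fun x => (x, y)) ⁻¹' S = Set.Icc (-r - y) (r - y) := by
    intro y
    ext x
    simp only [S, Set.mem_preimage, Set.mem_ofPred_eq, Set.mem_Icc, abs_le]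
    constructor <;> rintro ⟨h1, h2⟩ <;> constructor <;> linarith
  have : IsProbabilityMeasure (μ.map W) := Measure.isProbabilityMeasure_map hW.aemeasurable
  calc μ {ω | |X ω + W ω| ≤ r} = (μ.map X).prod (μ.map W) S := by
        rw [← (indepFun_iff_map_prod_eq_prod_map_map hX.aemeasurable hW.aemeasurable).mp hXW,
          Measure.map_apply (hX.prodMk hW) hS]
        rfl
    _ = ∫⁻ y, gaussianReal m v (Set.Icc (-r - y) (r - y)) ∂μ.map W := by
        rw [Measure.prod_apply_symm hS, hlaw]
        simp_rw [hslice]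
    _ ≤ ∫⁻ _, ENNReal.ofReal (2 * r / √(2 * π * v)) ∂μ.map W := by
        refine lintegral_mono fun y => (gaussianReal_Icc_le m hv _ _).trans_eq ?_
        ring_nf
    _ = ENNReal.ofReal (2 * r / √(2 * π * v)) := by simp

lemma mul_measureReal_sum_sq_ge_le {Ω ι : Type*} [MeasurableSpace Ω] {μ : Measure Ω}
    (s : Finset ι) {X : ι → Ω → ℝ} (hX : ∀ i ∈ s, Measurable (X i)) {v : ℝ≥0}
    (hlaw : ∀ i ∈ s, μ.map (X i) = gaussianReal 0 v) (T : ℝ) :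
    T * μ.real {ω | T ≤ ∑ i ∈ s, X i ω ^ 2} ≤ #s * v := by
  have hint : ∀ i ∈ s, Integrable (fun ω => X i ω ^ 2) μ := by
    intro i hi
    have h := (memLp_id_gaussianReal (μ := 0) (v := v) 2).integrable_sq
    rw [← hlaw i hi] at h
    exact h.comp_measurable (hX i hi)
  have hmoment : ∀ i ∈ s, ∫ ω, X i ω ^ 2 ∂μ = v := by
    intro i hi
    rw [← integral_sq_gaussianReal, ← hlaw i hi,
      integral_map (hX i hi).aemeasurable (by fun_prop)]
  calc T * μ.real {ω | T ≤ ∑ i ∈ s, X i ω ^ 2}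
      ≤ ∫ ω, ∑ i ∈ s, X i ω ^ 2 ∂μ :=
        mul_meas_ge_le_integral_of_nonneg
          (ae_of_all _ fun ω => sum_nonneg fun i _ => sq_nonneg _)
          (integrable_finsetSum s hint) T
    _ = #s * v := by
        rw [integral_finsetSum s hint, sum_congr rfl hmoment, sum_const, nsmul_eq_mul]

section Recursion

variable {Ω : Type*} {a : ℝ} {Z U : ℕ → Ω → ℝ}

lemma sq_aML_sub_mul_le (hU : ∀ i, U (i + 1) = fun ω => a * U i ω + Z (i + 1) ω)
    (n : ℕ) (ω : Ω) :
    (aML U n ω - a) ^ 2 * ∑ i ∈ Icc 1 (n - 1), U i ω ^ 2 ≤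
      ∑ i ∈ Icc 1 (n - 1), Z (i + 1) ω ^ 2 := by
  have hQ : 0 ≤ ∑ i ∈ Icc 1 (n - 1), Z (i + 1) ω ^ 2 := sum_nonneg fun i _ => sq_nonneg _
  rcases (sum_nonneg fun i _ => sq_nonneg (U i ω) :
    0 ≤ ∑ i ∈ Icc 1 (n - 1), U i ω ^ 2).eq_or_lt with hD | hD
  · rwa [← hD, mul_zero]
  have herr : aML U n ω - a =
      (∑ i ∈ Icc 1 (n - 1), U i ω * Z (i + 1) ω) / ∑ i ∈ Icc 1 (n - 1), U i ω ^ 2 := by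
    rw [aML, div_sub' hD.ne', sum_mul, ← sum_sub_distrib]
    congr 1
    refine sum_congr rfl fun i _ => ?_
    rw [hU i]
    ring
  rw [herr, div_pow, sq (∑ i ∈ Icc 1 (n - 1), U i ω ^ 2), ← div_div, div_mul_cancel₀ _ hD.ne',
    div_le_iff₀ hD, mul_comm]
  exact sum_mul_sq_le_sq_mul_sq _ _ _

lemma sq_aML_sub_lt (hU : ∀ i, U (i + 1) = fun ω => a * U i ω + Z (i + 1) ω)
    {n : ℕ} (hn : 2 ≤ n) {T : ℝ} (hT : 0 < T) {ω : Ω}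
    (hZ : ∑ i ∈ Icc 1 (n - 1), Z (i + 1) ω ^ 2 < T) (hUn : T * n < U (n - 1) ω ^ 2) :
    (aML U n ω - a) ^ 2 < 1 / n := by
  have hD : U (n - 1) ω ^ 2 ≤ ∑ i ∈ Icc 1 (n - 1), U i ω ^ 2 :=
    single_le_sum (f := fun i => U i ω ^ 2) (fun i _ => sq_nonneg _)
      (mem_Icc.mpr ⟨by omega, le_rfl⟩)
  have hbound := sq_aML_sub_mul_le hU n ω
  rw [lt_div_iff₀ (by positivity), ← mul_lt_mul_iff_of_pos_left hT, mul_one]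
  nlinarith [sq_nonneg (aML U n ω - a)]

lemma eq_sum_pow_mul (hU0 : U 0 = fun _ => 0)
    (hU : ∀ i, U (i + 1) = fun ω => a * U i ω + Z (i + 1) ω) (k : ℕ) (ω : Ω) :
    U k ω = ∑ j ∈ Icc 1 k, a ^ (k - j) * Z j ω := by
  induction k with
  | zero => simp [hU0]
  | succ k ih =>
    rw [hU k, sum_Icc_succ_top (by omega)]
    dsimp only
    rw [ih, mul_sum, Nat.sub_self, pow_zero, one_mul]
    congr 1
    refine sum_congr rfl fun j hj => ?_
    rw [Nat.sub_add_comm (mem_Icc.mp hj).2, pow_succ]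
    ring

end Recursion

section GaussMarkov

variable {Ω : Type*} [MeasurableSpace Ω] {μ : Measure Ω} [IsProbabilityMeasure μ] {a σ : ℝ}
  {Z U : ℕ → Ω → ℝ}

lemma measure_abs_le_le (hZmeas : ∀ i, Measurable (Z i)) (hZindep : iIndepFun Z μ)
    (hZlaw : ∀ i, μ.map (Z i) = gaussianReal 0 ⟨σ ^ 2, sq_nonneg σ⟩)
    (ha : a ≠ 0) (hσ : σ ≠ 0)
    (hU0 : U 0 = fun _ => 0) (hU : ∀ i, U (i + 1) = fun ω => a * U i ω + Z (i + 1) ω)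
    {k : ℕ} (hk : 1 ≤ k) (r : ℝ) :
    μ {ω | |U k ω| ≤ r} ≤ ENNReal.ofReal (2 * r / (√(2 * π) * |a ^ (k - 1) * σ|)) := by
  set Y : ℕ → Ω → ℝ := fun j ω => a ^ (k - j) * Z j ω
  have hYmeas : ∀ j, Measurable (Y j) := fun j => (hZmeas j).const_mul _
  have hdecomp : ∀ ω, U k ω = Y 1 ω + (∑ j ∈ Icc 2 k, Y j) ω := by
    intro ω
    rw [eq_sum_pow_mul hU0 hU, ← insert_Icc_add_one_left_eq_Icc hk, sum_insert (by simp),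
      Finset.sum_apply]
    rfl
  have hindep : IndepFun (Y 1) (∑ j ∈ Icc 2 k, Y j) μ :=
    ((hZindep.comp (fun j x => a ^ (k - j) * x) fun j => measurable_const_mul _)
      |>.indepFun_finsetSum_of_notMem hYmeas (by simp : 1 ∉ Icc 2 k)).symm
  have hlaw : μ.map (Y 1) = gaussianReal 0 ⟨(a ^ (k - 1) * σ) ^ 2, sq_nonneg _⟩ := by
    rw [show Y 1 = (a ^ (k - 1) * ·) ∘ Z 1 from rfl,
      ← Measure.map_map (measurable_const_mul _) (hZmeas 1), hZlaw]
    refine (gaussianReal_map_const_mul (μ := 0) (v := ⟨σ ^ 2, sq_nonneg σ⟩) _).trans ?_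
    rw [mul_zero]
    congr 1
    exact NNReal.eq (mul_pow _ _ _).symm
  have hv : (⟨(a ^ (k - 1) * σ) ^ 2, sq_nonneg _⟩ : ℝ≥0) ≠ 0 := fun h =>
    pow_ne_zero 2 (mul_ne_zero (pow_ne_zero _ ha) hσ) (congrArg Subtype.val h)
  have hsqrt : √(2 * π * (⟨(a ^ (k - 1) * σ) ^ 2, sq_nonneg _⟩ : ℝ≥0)) =
      √(2 * π) * |a ^ (k - 1) * σ| := by
    rw [show ((⟨(a ^ (k - 1) * σ) ^ 2, sq_nonneg _⟩ : ℝ≥0) : ℝ) = (a ^ (k - 1) * σ) ^ 2 from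
      rfl, Real.sqrt_mul (by positivity), Real.sqrt_sq_eq_abs]
  have hWmeas : Measurable (∑ j ∈ Icc 2 k, Y j) :=
    Finset.sum_fn (Icc 2 k) Y ▸ Finset.measurable_sum _ fun j _ => hYmeas j
  simp_rw [hdecomp, ← hsqrt]
  exact measure_abs_add_le_le (hYmeas 1) hWmeas hindep hv hlaw r

theorem measureReal_inv_le_sq_aML_sub_le (hZmeas : ∀ i, Measurable (Z i))
    (hZindep : iIndepFun Z μ) (hZlaw : ∀ i, μ.map (Z i) = gaussianReal 0 ⟨σ ^ 2, sq_nonneg σ⟩)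
    (ha : a ≠ 0) (hσ : σ ≠ 0) (hU0 : U 0 = fun _ => 0)
    (hU : ∀ i, U (i + 1) = fun ω => a * U i ω + Z (i + 1) ω)
    {n : ℕ} (hn : 2 ≤ n) {T r : ℝ} (hT : 0 < T) (hr : 0 ≤ r) (hTr : T * n ≤ r ^ 2) :
    μ.real {ω | 1 / n ≤ (aML U n ω - a) ^ 2} ≤
      n * σ ^ 2 / T + 2 * r / (√(2 * π) * |a ^ (n - 2) * σ|) := by
  have hsub : {ω | 1 / n ≤ (aML U n ω - a) ^ 2} ⊆
      {ω | T ≤ ∑ i ∈ Icc 1 (n - 1), Z (i + 1) ω ^ 2} ∪ {ω | |U (n - 1) ω| ≤ r} := by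
    intro ω hω
    by_contra h
    simp only [Set.mem_union, Set.mem_ofPred_eq, not_or, not_le] at h hω
    have hUn : T * n < U (n - 1) ω ^ 2 :=
      hTr.trans_lt (sq_abs (U (n - 1) ω) ▸ pow_lt_pow_left₀ h.2 hr two_ne_zero)
    exact (sq_aML_sub_lt hU hn hT h.1 hUn).not_ge hω
  have hnoise : μ.real {ω | T ≤ ∑ i ∈ Icc 1 (n - 1), Z (i + 1) ω ^ 2} ≤ n * σ ^ 2 / T := by
    rw [le_div_iff₀ hT, mul_comm]
    refine (mul_measureReal_sum_sq_ge_le _ (fun i _ => hZmeas (i + 1))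
      (fun i _ => hZlaw (i + 1)) T).trans ?_
    exact mul_le_mul (by simp) le_rfl (NNReal.coe_nonneg _) (Nat.cast_nonneg n)
  have hsmall : μ.real {ω | |U (n - 1) ω| ≤ r} ≤
      2 * r / (√(2 * π) * |a ^ (n - 2) * σ|) := by
    refine ENNReal.toReal_le_of_le_ofReal (by positivity) ?_
    simpa only [show n - 1 - 1 = n - 2 by omega] using
      measure_abs_le_le hZmeas hZindep hZlaw ha hσ hU0 hU (by omega : 1 ≤ n - 1) r
  calc μ.real {ω | 1 / n ≤ (aML U n ω - a) ^ 2}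
      ≤ μ.real ({ω | T ≤ ∑ i ∈ Icc 1 (n - 1), Z (i + 1) ω ^ 2} ∪ {ω | |U (n - 1) ω| ≤ r}) :=
        measureReal_mono hsub
    _ ≤ _ := measureReal_union_le _ _
    _ ≤ _ := add_le_add hnoise hsmall

end GaussMarkov

lemma eventually_mul_le_exp (C : ℝ) {δ : ℝ} (hδ : 0 < δ) :
    ∀ᶠ n : ℕ in atTop, C * n ≤ exp (δ * n) := by
  have h := ((isLittleO_pow_exp_pos_mul_atTop 1 hδ).const_mul_left C).def one_pos
  filter_upwards [tendsto_natCast_atTop_atTop.eventually h] with n hn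
  simp only [pow_one, one_mul, Real.norm_eq_abs, abs_exp] at hn
  exact (le_abs_self _).trans hn

lemma eventually_bound_le_two_mul_exp {a σ : ℝ} (ha : 1 < a) (hσ : 0 < σ) :
    ∀ᶠ n : ℕ in atTop,
      n * σ ^ 2 / exp (3 / 4 * log a * n) +
          2 * (n * exp (3 / 8 * log a * n)) / (√(2 * π) * |a ^ (n - 2) * σ|) ≤
        2 * exp (-(1 / 2 * log a) * n) := by
  have ha0 : 0 < a := one_pos.trans ha
  set t := log a
  have ht : 0 < t := log_pos ha
  filter_upwards [eventually_mul_le_exp (σ ^ 2) (by positivity : 0 < t / 4),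
    eventually_mul_le_exp (2 * a ^ 2 / (√(2 * π) * σ)) (by positivity : 0 < t / 8),
    eventually_ge_atTop 2] with n hnoise hsmall hn
  have hpow : a ^ (n - 2) * a ^ 2 = exp (t * n) := by
    rw [← pow_add, Nat.sub_add_cancel hn, mul_comm, exp_nat_mul, exp_log ha0]
  have h1 : n * σ ^ 2 / exp (3 / 4 * t * n) ≤ exp (-(1 / 2 * t) * n) := by
    rw [div_le_iff₀ (exp_pos _), ← exp_add, mul_comm,
      show -(1 / 2 * t) * n + 3 / 4 * t * n = t / 4 * n by ring]
    exact hnoise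
  have h2 : 2 * (n * exp (3 / 8 * t * n)) / (√(2 * π) * |a ^ (n - 2) * σ|) ≤
      exp (-(1 / 2 * t) * n) := by
    rw [abs_of_pos (by positivity), div_le_iff₀ (by positivity)]
    refine le_of_mul_le_mul_right ?_ (by positivity : 0 < a ^ 2)
    calc 2 * (n * exp (3 / 8 * t * n)) * a ^ 2
        = 2 * a ^ 2 / (√(2 * π) * σ) * n * (√(2 * π) * σ * exp (3 / 8 * t * n)) := by
          field_simp
      _ ≤ exp (t / 8 * n) * (√(2 * π) * σ * exp (3 / 8 * t * n)) := by gcongr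
      _ = exp (-(1 / 2 * t) * n) * (√(2 * π) * σ) * exp (t * n) := by
          have hexp : exp (t / 8 * n) * exp (3 / 8 * t * n) =
              exp (-(1 / 2 * t) * n) * exp (t * n) := by
            rw [← exp_add, ← exp_add]
            ring_nf
          linear_combination (√(2 * π) * σ) * hexp
      _ = exp (-(1 / 2 * t) * n) * (√(2 * π) * (a ^ (n - 2) * σ)) * a ^ 2 := by
          rw [← hpow]
          ring
  linarith

theorem statement7
    {Ω : Type*} [MeasurableSpace Ω] (μ : Measure Ω) [IsProbabilityMeasure μ]
    (a σ : ℝ) (ha : 1 < a) (hσ : 0 < σ)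
    (Z : ℕ → Ω → ℝ) (hZmeas : ∀ i, Measurable (Z i))
    (hZindep : iIndepFun Z μ)
    (hZlaw : ∀ i, Measure.map (Z i) μ = gaussianReal 0 ⟨σ ^ 2, sq_nonneg σ⟩)
    (U : ℕ → Ω → ℝ) (hU0 : U 0 = fun _ => 0)
    (hU : ∀ i, U (i + 1) = fun ω => a * U i ω + Z (i + 1) ω) :
    ∃ c : ℝ, (1 / 2) * Real.log a ≤ c ∧ ∃ N : ℕ, ∀ n : ℕ, N ≤ n →
      (μ {ω | |aML U n ω - a| ≥ Real.sqrt (Real.log (Real.log n) / n)}).toReal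
        ≤ 2 * Real.exp (-c * n) := by
  refine ⟨1 / 2 * log a, le_rfl, eventually_atTop.mp ?_⟩
  have hloglog : ∀ᶠ n : ℕ in atTop, 1 ≤ log (log n) :=
    ((tendsto_log_atTop.comp tendsto_log_atTop).comp
      tendsto_natCast_atTop_atTop).eventually_ge_atTop 1
  filter_upwards [eventually_bound_le_two_mul_exp ha hσ, eventually_ge_atTop 2, hloglog]
    with n hbound hn hll
  have hn1 : (1 : ℝ) ≤ n := by exact_mod_cast one_le_two.trans hn
  have hevent : {ω | |aML U n ω - a| ≥ √(log (log n) / n)} ⊆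
      {ω | 1 / n ≤ (aML U n ω - a) ^ 2} := by
    intro ω hω
    calc 1 / (n : ℝ) ≤ log (log n) / n := by gcongr
      _ = √(log (log n) / n) ^ 2 := (sq_sqrt (by positivity)).symm
      _ ≤ |aML U n ω - a| ^ 2 := pow_le_pow_left₀ (sqrt_nonneg _) hω 2
      _ = (aML U n ω - a) ^ 2 := sq_abs _
  have hTr : exp (3 / 4 * log a * n) * n ≤ (n * exp (3 / 8 * log a * n)) ^ 2 := by
    have hsq : exp (3 / 4 * log a * n) = exp (3 / 8 * log a * n) ^ 2 := by
      rw [sq, ← exp_add]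
      ring_nf
    rw [hsq, mul_pow, mul_comm]
    exact mul_le_mul_of_nonneg_right (by nlinarith) (by positivity)
  calc (μ {ω | |aML U n ω - a| ≥ √(log (log n) / n)}).toReal
      ≤ μ.real {ω | 1 / n ≤ (aML U n ω - a) ^ 2} := measureReal_mono hevent
    _ ≤ _ := measureReal_inv_le_sq_aML_sub_le hZmeas hZindep hZlaw (by positivity) hσ.ne'
          hU0 hU hn (exp_pos _) (by positivity) hTr
    _ ≤ _ := hbound
end

section
/- Fix η > 0 and 0 < s < 2η/σ². Let r₁ < r₂ be the two real roots of the quadratic 2σ²x² + [a² + 2σ²s(a+η) − 1]x + α₁ = 0 and set q = ([a² + 2σ²s(a+η)] + 2σ²r₁)/([a² + 2σ²s(a+η)] + 2σ²r₂) and c = (α₁ − r₁)/(α₁ − r₂). Then: (i) q ∈ (0,1); (ii) for every ℓ ≥ 1, α_ℓ = r₁ + (r₁ − r₂)·c·q^{ℓ−1}/(1 − c·q^{ℓ−1}); (iii) the sequence (α_ℓ) is nonincreasing with α_ℓ ≤ α₁ < 0 for all ℓ ≥ 1; and (iv) α_ℓ → r₁ as ℓ → ∞. -/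
open Filter

open Set Topology

/-! The recursion is `α_{ℓ+1} = T α_ℓ` for the Möbius map `T x = (A x + α₁) / (1 - B x)`,
whose fixed points are the roots `r₁ < r₂` of `B x² + (A - 1) x + α₁`. In the coordinate
`t = (x - r₁) / (x - r₂)` the map `T` becomes multiplication by `q = (A + B r₁) / (A + B r₂)`,
so `α_ℓ` corresponds to `t = c q^{ℓ-1}`. Vieta's formulas give
`(A + B r₁)(A + B r₂) = A + B α₁ = (a + σ² s)² > 0`, and together with `r₁ < α₁ < r₂` this
yields `0 < q < 1` and `c < 0`. Since `t ↦ r₁ + (r₁ - r₂) t / (1 - t)` is antitone for `t < 1`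
and `c q^n` increases to `0`, the sequence decreases to `r₁`. -/

noncomputable def riccatiMap (A B α x : ℝ) : ℝ := (A * x + α) / (1 - B * x)

/-- The inverse of the coordinate `x ↦ (x - r₁) / (x - r₂)`. -/
noncomputable def pointOfRatio (r₁ r₂ t : ℝ) : ℝ := r₁ + (r₁ - r₂) * t / (1 - t)

section PointOfRatio

variable {r₁ r₂ : ℝ}

lemma pointOfRatio_ratio {x : ℝ} (hr : r₁ ≠ r₂) (hx : x ≠ r₂) :
    pointOfRatio r₁ r₂ ((x - r₁) / (x - r₂)) = x := by
  have hx' : x - r₂ ≠ 0 := sub_ne_zero.mpr hx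
  have hr' : r₁ - r₂ ≠ 0 := sub_ne_zero.mpr hr
  have h1 : 1 - (x - r₁) / (x - r₂) = (r₁ - r₂) / (x - r₂) := by field_simp; ring
  rw [pointOfRatio, h1]
  field_simp
  ring

lemma eq_pointOfRatio_iff {x t : ℝ} (ht : t ≠ 1) :
    x = pointOfRatio r₁ r₂ t ↔ x - r₁ = t * (x - r₂) := by
  have ht' : 1 - t ≠ 0 := sub_ne_zero.mpr (Ne.symm ht)
  rw [pointOfRatio, ← sub_eq_iff_eq_add', eq_div_iff ht']
  constructor <;> intro h <;> linear_combination h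

lemma pointOfRatio_antitoneOn (hr : r₁ ≤ r₂) : AntitoneOn (pointOfRatio r₁ r₂) (Iio 1) := by
  intro t ht u hu htu
  have ht' : 0 < 1 - t := sub_pos.mpr ht
  have hu' : 0 < 1 - u := sub_pos.mpr hu
  simp only [pointOfRatio, add_le_add_iff_left]
  rw [div_le_div_iff₀ hu' ht']
  nlinarith [mul_nonneg (sub_nonneg.mpr hr) (sub_nonneg.mpr htu)]

lemma antitone_pointOfRatio_geom {c q : ℝ} (hr : r₁ ≤ r₂) (hc : c ≤ 0) (hq₀ : 0 ≤ q)
    (hq₁ : q ≤ 1) : Antitone fun n : ℕ => pointOfRatio r₁ r₂ (c * q ^ n) := by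
  have hneg : ∀ n : ℕ, c * q ^ n ≤ 0 := fun n => mul_nonpos_of_nonpos_of_nonneg hc (by positivity)
  refine antitone_nat_of_succ_le fun n => pointOfRatio_antitoneOn hr
    (lt_of_le_of_lt (hneg n) one_pos) (lt_of_le_of_lt (hneg (n + 1)) one_pos) ?_
  exact mul_le_mul_of_nonpos_left (pow_le_pow_of_le_one hq₀ hq₁ n.le_succ) hc

lemma tendsto_pointOfRatio_geom {c q : ℝ} (hq₀ : 0 ≤ q) (hq₁ : q < 1) :
    Tendsto (fun n : ℕ => pointOfRatio r₁ r₂ (c * q ^ n)) atTop (𝓝 r₁) := by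
  have hcont : ContinuousAt (pointOfRatio r₁ r₂) 0 := by
    unfold pointOfRatio
    exact ContinuousAt.add continuousAt_const
      ((continuousAt_const.mul continuousAt_id).div (continuousAt_const.sub continuousAt_id)
        (by norm_num))
  have hgeom : Tendsto (fun n : ℕ => c * q ^ n) atTop (𝓝 0) := by
    simpa using (tendsto_pow_atTop_nhds_zero_of_lt_one hq₀ hq₁).const_mul c
  have hzero : Tendsto (pointOfRatio r₁ r₂) (𝓝 0) (𝓝 r₁) := by
    simpa [pointOfRatio] using hcont.tendsto
  exact hzero.comp hgeom

end PointOfRatio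

section Riccati

variable {A B α r₁ r₂ : ℝ}

lemma riccati_vieta (hr : r₁ ≠ r₂) (h₁ : B * r₁ ^ 2 + (A - 1) * r₁ + α = 0)
    (h₂ : B * r₂ ^ 2 + (A - 1) * r₂ + α = 0) :
    B * (r₁ + r₂) = 1 - A ∧ B * (r₁ * r₂) = α := by
  have hsum : B * (r₁ + r₂) = 1 - A := by
    have h : (r₁ - r₂) * (B * (r₁ + r₂) - (1 - A)) = 0 := by linear_combination h₁ - h₂
    linarith [(mul_eq_zero.mp h).resolve_left (sub_ne_zero.mpr hr)]
  exact ⟨hsum, by linear_combination r₁ * hsum - h₁⟩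

lemma riccatiMap_sub_root {x r : ℝ} (hr : B * r ^ 2 + (A - 1) * r + α = 0) (hx : 1 - B * x ≠ 0) :
    (riccatiMap A B α x - r) * (1 - B * x) = (x - r) * (A + B * r) := by
  rw [riccatiMap, sub_mul, div_mul_cancel₀ _ hx]
  linear_combination hr

lemma riccatiMap_pointOfRatio {t : ℝ} (hr : r₁ ≠ r₂) (h₁ : B * r₁ ^ 2 + (A - 1) * r₁ + α = 0)
    (h₂ : B * r₂ ^ 2 + (A - 1) * r₂ + α = 0) (hA₂ : A + B * r₂ ≠ 0) (ht : t ≠ 1)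
    (hqt : t * ((A + B * r₁) / (A + B * r₂)) ≠ 1) :
    riccatiMap A B α (pointOfRatio r₁ r₂ t) =
      pointOfRatio r₁ r₂ (t * ((A + B * r₁) / (A + B * r₂))) := by
  set x := pointOfRatio r₁ r₂ t
  have hx : x - r₁ = t * (x - r₂) := (eq_pointOfRatio_iff ht).mp rfl
  -- Vieta: `1 - B r₁ = A + B r₂` and `1 - B r₂ = A + B r₁`
  have hden : (1 - t) * (1 - B * x) = (A + B * r₂) - t * (A + B * r₁) := by
    linear_combination -B * hx + (t - 1) * (riccati_vieta hr h₁ h₂).1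
  have hBx : 1 - B * x ≠ 0 := by
    intro h
    apply hqt
    rw [h, mul_zero, eq_comm, sub_eq_zero] at hden
    field_simp
    linarith
  rw [eq_pointOfRatio_iff hqt]
  have k₁ := riccatiMap_sub_root h₁ hBx
  have k₂ := riccatiMap_sub_root h₂ hBx
  generalize riccatiMap A B α x = y at k₁ k₂ ⊢
  apply mul_right_cancel₀ hBx
  calc (y - r₁) * (1 - B * x) = (x - r₁) * (A + B * r₁) := k₁
    _ = t * ((A + B * r₁) / (A + B * r₂)) * ((x - r₂) * (A + B * r₂)) := by
      rw [hx, mul_mul_mul_comm, div_mul_cancel₀ _ hA₂]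
    _ = t * ((A + B * r₁) / (A + B * r₂)) * (y - r₂) * (1 - B * x) := by rw [← k₂]; ring

lemma riccatiMap_iterate_pointOfRatio {t : ℝ} (hr : r₁ ≠ r₂)
    (h₁ : B * r₁ ^ 2 + (A - 1) * r₁ + α = 0) (h₂ : B * r₂ ^ 2 + (A - 1) * r₂ + α = 0)
    (hA₁ : 0 < A + B * r₁) (hA₂ : 0 < A + B * r₂) (ht : t ≤ 0) (n : ℕ) :
    (riccatiMap A B α)^[n] (pointOfRatio r₁ r₂ t) =
      pointOfRatio r₁ r₂ (t * ((A + B * r₁) / (A + B * r₂)) ^ n) := by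
  have hq : 0 < (A + B * r₁) / (A + B * r₂) := div_pos hA₁ hA₂
  induction n with
  | zero => simp
  | succ n ih =>
    have htn : t * ((A + B * r₁) / (A + B * r₂)) ^ n ≤ 0 :=
      mul_nonpos_of_nonpos_of_nonneg ht (by positivity)
    have htnq : t * ((A + B * r₁) / (A + B * r₂)) ^ n * ((A + B * r₁) / (A + B * r₂)) ≤ 0 :=
      mul_nonpos_of_nonpos_of_nonneg htn hq.le
    rw [Function.iterate_succ_apply', ih, riccatiMap_pointOfRatio hr h₁ h₂ hA₂.ne'
      (htn.trans_lt one_pos).ne (htnq.trans_lt one_pos).ne, pow_succ, mul_assoc]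

lemma riccati_roots_lt_lt (hB : 0 < B) (hα : α < 0) (hAα : 0 < A + B * α) (hr : r₁ < r₂)
    (h₁ : B * r₁ ^ 2 + (A - 1) * r₁ + α = 0) (h₂ : B * r₂ ^ 2 + (A - 1) * r₂ + α = 0) :
    r₁ < α ∧ α < r₂ := by
  obtain ⟨hsum, hprod⟩ := riccati_vieta hr.ne h₁ h₂
  have hfactor : B * ((α - r₁) * (α - r₂)) = α * (A + B * α) := by
    linear_combination (-α) * hsum + hprod
  have hneg : (α - r₁) * (α - r₂) < 0 :=
    neg_of_mul_neg_right (hfactor ▸ mul_neg_of_neg_of_pos hα hAα) hB.le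
  rcases mul_neg_iff.mp hneg with ⟨h, h'⟩ | ⟨h, h'⟩
  · exact ⟨by linarith, by linarith⟩
  · linarith

lemma riccati_multipliers_pos (hB : 0 < B) (hα : α < 0) (hAα : 0 < A + B * α) (hr : r₁ < r₂)
    (h₁ : B * r₁ ^ 2 + (A - 1) * r₁ + α = 0) (h₂ : B * r₂ ^ 2 + (A - 1) * r₂ + α = 0) :
    0 < A + B * r₁ ∧ 0 < A + B * r₂ := by
  obtain ⟨hsum, hprod⟩ := riccati_vieta hr.ne h₁ h₂
  have hA₂ : 0 < A + B * r₂ := by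
    nlinarith [mul_lt_mul_of_pos_left (riccati_roots_lt_lt hB hα hAα hr h₁ h₂).2 hB]
  have hmul : (A + B * r₁) * (A + B * r₂) = A + B * α := by
    linear_combination A * hsum + B * hprod
  exact ⟨pos_of_mul_pos_left (hmul ▸ hAα) hA₂.le, hA₂⟩

end Riccati

lemma alphaSeq_succ_eq_iterate (a σ η s : ℝ) (n : ℕ) :
    alphaSeq a σ η s (n + 1) =
      (riccatiMap (a ^ 2 + 2 * σ ^ 2 * s * (a + η)) (2 * σ ^ 2) (alphaSeq a σ η s 1))^[n]
        (alphaSeq a σ η s 1) := by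
  induction n with
  | zero => rfl
  | succ n ih => rw [Function.iterate_succ_apply', ← ih]; rfl

theorem statement9_general (a σ η s : ℝ) (ha : 1 < a) (hσ : 0 < σ)
    (hs0 : 0 < s) (hs1 : s < 2 * η / σ ^ 2)
    (r₁ r₂ : ℝ) (hr : r₁ < r₂)
    (hroot₁ : 2 * σ ^ 2 * r₁ ^ 2 + (a ^ 2 + 2 * σ ^ 2 * s * (a + η) - 1) * r₁
        + alphaSeq a σ η s 1 = 0)
    (hroot₂ : 2 * σ ^ 2 * r₂ ^ 2 + (a ^ 2 + 2 * σ ^ 2 * s * (a + η) - 1) * r₂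
        + alphaSeq a σ η s 1 = 0)
    (q c : ℝ)
    (hq : q = ((a ^ 2 + 2 * σ ^ 2 * s * (a + η)) + 2 * σ ^ 2 * r₁)
        / ((a ^ 2 + 2 * σ ^ 2 * s * (a + η)) + 2 * σ ^ 2 * r₂))
    (hc : c = (alphaSeq a σ η s 1 - r₁) / (alphaSeq a σ η s 1 - r₂)) :
    -- (i) q ∈ (0,1)
    (0 < q ∧ q < 1) ∧
    -- (ii) closed form for α_ℓ
    (∀ ℓ : ℕ, 1 ≤ ℓ →
      alphaSeq a σ η s ℓ
        = r₁ + (r₁ - r₂) * (c * q ^ (ℓ - 1)) / (1 - c * q ^ (ℓ - 1))) ∧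
    -- (iii) nonincreasing with α_ℓ ≤ α₁ < 0
    (∀ ℓ : ℕ, 1 ≤ ℓ → alphaSeq a σ η s (ℓ + 1) ≤ alphaSeq a σ η s ℓ) ∧
    (∀ ℓ : ℕ, 1 ≤ ℓ → alphaSeq a σ η s ℓ ≤ alphaSeq a σ η s 1) ∧
    alphaSeq a σ η s 1 < 0 ∧
    -- (iv) α_ℓ → r₁
    Tendsto (fun ℓ : ℕ => alphaSeq a σ η s ℓ) atTop (nhds r₁) := by
  have hB : 0 < 2 * σ ^ 2 := by positivity
  have hα : alphaSeq a σ η s 1 < 0 := by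
    have : s * σ ^ 2 < 2 * η := (lt_div_iff₀ (by positivity)).mp hs1
    change (σ ^ 2 * s ^ 2 - 2 * η * s) / 2 < 0
    nlinarith
  have hAα : 0 < a ^ 2 + 2 * σ ^ 2 * s * (a + η) + 2 * σ ^ 2 * alphaSeq a σ η s 1 := by
    change 0 < a ^ 2 + 2 * σ ^ 2 * s * (a + η) + 2 * σ ^ 2 * ((σ ^ 2 * s ^ 2 - 2 * η * s) / 2)
    have : 0 < a + σ ^ 2 * s := by positivity
    nlinarith
  obtain ⟨hr₁α, hαr₂⟩ := riccati_roots_lt_lt hB hα hAα hr hroot₁ hroot₂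
  obtain ⟨hA₁, hA₂⟩ := riccati_multipliers_pos hB hα hAα hr hroot₁ hroot₂
  have hq₀ : 0 < q := hq ▸ div_pos hA₁ hA₂
  have hq₁ : q < 1 := hq ▸ (div_lt_one hA₂).mpr (by nlinarith)
  have hc₀ : c ≤ 0 := hc ▸ div_nonpos_of_nonneg_of_nonpos (by linarith) (by linarith)
  have hclosed (n : ℕ) : alphaSeq a σ η s (n + 1) = pointOfRatio r₁ r₂ (c * q ^ n) := by
    have hα₁ : alphaSeq a σ η s 1 = pointOfRatio r₁ r₂ c := by
      rw [hc, pointOfRatio_ratio hr.ne hαr₂.ne]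
    calc alphaSeq a σ η s (n + 1)
        = (riccatiMap (a ^ 2 + 2 * σ ^ 2 * s * (a + η)) (2 * σ ^ 2) (alphaSeq a σ η s 1))^[n]
            (pointOfRatio r₁ r₂ c) := by rw [alphaSeq_succ_eq_iterate, ← hα₁]
      _ = pointOfRatio r₁ r₂ (c * q ^ n) := by
        rw [riccatiMap_iterate_pointOfRatio hr.ne hroot₁ hroot₂ hA₁ hA₂ hc₀, hq]
  have hanti : Antitone fun n => alphaSeq a σ η s (n + 1) := fun m n hmn => by
    simpa only [hclosed] using antitone_pointOfRatio_geom hr.le hc₀ hq₀.le hq₁.le hmn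
  refine ⟨⟨hq₀, hq₁⟩, fun ℓ hℓ => ?_, fun ℓ hℓ => ?_, fun ℓ hℓ => ?_, hα, ?_⟩
  · obtain ⟨n, rfl⟩ := Nat.exists_eq_add_of_le' hℓ
    exact hclosed n
  · obtain ⟨n, rfl⟩ := Nat.exists_eq_add_of_le' hℓ
    exact hanti n.le_succ
  · obtain ⟨n, rfl⟩ := Nat.exists_eq_add_of_le' hℓ
    exact hanti n.zero_le
  · refine (tendsto_add_atTop_iff_nat 1).mp ?_
    simpa only [hclosed] using tendsto_pointOfRatio_geom hq₀.le hq₁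

theorem statement9 (a σ η s : ℝ) (ha : 1 < a) (hσ : 0 < σ) (hη : 0 < η)
    (hs0 : 0 < s) (hs1 : s < 2 * η / σ ^ 2)
    (r₁ r₂ : ℝ) (hr : r₁ < r₂)
    (hroot₁ : 2 * σ ^ 2 * r₁ ^ 2 + (a ^ 2 + 2 * σ ^ 2 * s * (a + η) - 1) * r₁
        + alphaSeq a σ η s 1 = 0)
    (hroot₂ : 2 * σ ^ 2 * r₂ ^ 2 + (a ^ 2 + 2 * σ ^ 2 * s * (a + η) - 1) * r₂
        + alphaSeq a σ η s 1 = 0)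
    (q c : ℝ)
    (hq : q = ((a ^ 2 + 2 * σ ^ 2 * s * (a + η)) + 2 * σ ^ 2 * r₁)
        / ((a ^ 2 + 2 * σ ^ 2 * s * (a + η)) + 2 * σ ^ 2 * r₂))
    (hc : c = (alphaSeq a σ η s 1 - r₁) / (alphaSeq a σ η s 1 - r₂)) :
    -- (i) q ∈ (0,1)
    (0 < q ∧ q < 1) ∧
    -- (ii) closed form for α_ℓ
    (∀ ℓ : ℕ, 1 ≤ ℓ →
      alphaSeq a σ η s ℓ
        = r₁ + (r₁ - r₂) * (c * q ^ (ℓ - 1)) / (1 - c * q ^ (ℓ - 1))) ∧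
    -- (iii) nonincreasing with α_ℓ ≤ α₁ < 0
    (∀ ℓ : ℕ, 1 ≤ ℓ → alphaSeq a σ η s (ℓ + 1) ≤ alphaSeq a σ η s ℓ) ∧
    (∀ ℓ : ℕ, 1 ≤ ℓ → alphaSeq a σ η s ℓ ≤ alphaSeq a σ η s 1) ∧
    alphaSeq a σ η s 1 < 0 ∧
    -- (iv) α_ℓ → r₁
    Tendsto (fun ℓ : ℕ => alphaSeq a σ η s ℓ) atTop (nhds r₁) :=
  statement9_general a σ η s ha hσ hs0 hs1 r₁ r₂ hr hroot₁ hroot₂ q c hq hc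
end

section
/- For every real constant r with −1 ≤ r ≤ 1, the integral ∫_{−π}^{π} log(1 − r·cos w) dw equals 4π·log( (√(1+r) + √(1−r))/2 ). -/
/-!
For real `a` and `|z| = 1` one has `|z - a|² = 1 + a² - 2a Re z`, so if `r (1 + a²) = 2a`
then `log (1 - r cos w) = 2 log |e^{iw} - a| - log (1 + a²)` away from `e^{iw} = a`.
For `|a| ≤ 1` the circle average of `log |z - a|` vanishes (Jensen), hence the integral
is `-2π log (1 + a²)`. With `p = √(1 + r)`, `q = √(1 - r)` and `a = (p - q) / (p + q)`
we get `1 + a² = (2 / (p + q))²`.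
-/

open Real MeasureTheory Metric Filter

theorem integral_comp_circleMap_neg_pi_pi {E : Type*} [NormedAddCommGroup E] [NormedSpace ℝ E]
    (f : ℂ → E) (c : ℂ) (R : ℝ) :
    ∫ θ in (-π)..π, f (circleMap c R θ) = (2 * π) • circleAverage f c R := by
  rw [circleAverage_eq_integral_add (-π), smul_inv_smul₀ (by positivity),
    intervalIntegral.integral_comp_add_right (fun θ ↦ f (circleMap c R θ))]
  congr 1 <;> ring

theorem re_circleMap_zero_one (θ : ℝ) : (circleMap 0 1 θ).re = cos θ := by
  simp [circleMap_zero, Complex.exp_ofReal_mul_I_re]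

theorem norm_sub_ofReal_sq_of_norm_eq_one {z : ℂ} (hz : ‖z‖ = 1) (a : ℝ) :
    ‖z - a‖ ^ 2 = 1 + a ^ 2 - 2 * a * z.re := by
  have hz2 : z.re * z.re + z.im * z.im = 1 := by
    rw [← Complex.normSq_apply, ← Complex.sq_norm, hz, one_pow]
  rw [Complex.sq_norm, Complex.normSq_apply]
  simp only [Complex.sub_re, Complex.ofReal_re, Complex.sub_im, Complex.ofReal_im, sub_zero]
  linear_combination hz2

theorem circleAverage_log_one_sub_mul_re {a r : ℝ} (ha : |a| ≤ 1)
    (hr : r * (1 + a ^ 2) = 2 * a) :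
    circleAverage (fun z : ℂ ↦ log (1 - r * z.re)) 0 1 = -log (1 + a ^ 2) := by
  have hpos : 0 < 1 + a ^ 2 := by positivity
  have hpointwise : (fun z : ℂ ↦ log (1 - r * z.re)) =ᶠ[codiscreteWithin (sphere 0 |1|)]
      fun z ↦ 2 * log ‖z - a‖ - log (1 + a ^ 2) := by
    filter_upwards [self_mem_codiscreteWithin (sphere (0 : ℂ) |1|),
      compl_singleton_mem_codiscreteWithin (a : ℂ)] with z hz hza
    have hz1 : ‖z‖ = 1 := by simpa using hz
    have hne : ‖z - a‖ ^ 2 ≠ 0 := by simpa [sub_eq_zero] using hza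
    rw [show 2 * log ‖z - a‖ = log (‖z - a‖ ^ 2) by rw [log_pow]; norm_num,
      ← log_div hne hpos.ne', norm_sub_ofReal_sq_of_norm_eq_one hz1]
    congr 1
    field_simp
    linear_combination -z.re * hr
  have hcenter : (a : ℂ) ∈ closedBall 0 |1| := by simpa using ha
  have hint : CircleIntegrable (fun z : ℂ ↦ 2 * log ‖z - a‖) 0 1 :=
    (circleIntegrable_log_norm_sub_const 1).const_smul (a := (2 : ℝ))
  rw [circleAverage_congr_codiscreteWithin hpointwise one_ne_zero,
    circleAverage_fun_sub hint (circleIntegrable_const _ 0 1),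
    show (fun z : ℂ ↦ 2 * log ‖z - a‖) = (2 : ℝ) • fun z : ℂ ↦ log ‖z - a‖ from
      rfl,
    circleAverage_smul, circleAverage_log_norm_sub_const_of_mem_closedBall hcenter,
    circleAverage_const]
  simp

theorem statement12 (r : ℝ) (hr : -1 ≤ r) (hr' : r ≤ 1) :
    ∫ w in (-π)..π, Real.log (1 - r * Real.cos w)
      = 4 * π * Real.log ((Real.sqrt (1 + r) + Real.sqrt (1 - r)) / 2) := by
  set p := √(1 + r)
  set q := √(1 - r)
  have hp2 : p ^ 2 = 1 + r := sq_sqrt (by linarith)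
  have hq2 : q ^ 2 = 1 - r := sq_sqrt (by linarith)
  have hp : 0 ≤ p := sqrt_nonneg _
  have hq : 0 ≤ q := sqrt_nonneg _
  have hpq : 0 < p + q := by nlinarith
  set a := (p - q) / (p + q)
  have ha : |a| ≤ 1 := by
    rw [abs_div, abs_of_pos hpq, div_le_one hpq, abs_le]
    constructor <;> linarith
  have hra : r * (1 + a ^ 2) = 2 * a := by
    simp only [a]
    field_simp
    linear_combination (2 * r - 2) * hp2 + (2 * r + 2) * hq2
  have hsq : 1 + a ^ 2 = ((p + q) / 2)⁻¹ ^ 2 := by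
    simp only [a]
    field_simp
    linear_combination 2 * hp2 + 2 * hq2
  calc ∫ w in (-π)..π, log (1 - r * cos w)
      = 2 * π * circleAverage (fun z : ℂ ↦ log (1 - r * z.re)) 0 1 := by
        simpa [re_circleMap_zero_one] using
          integral_comp_circleMap_neg_pi_pi (fun z : ℂ ↦ log (1 - r * z.re)) 0 1
    _ = 2 * π * -log (1 + a ^ 2) := by rw [circleAverage_log_one_sub_mul_re ha hra]
    _ = 4 * π * log ((p + q) / 2) := by rw [hsq, log_pow, log_inv]; ring
end
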